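/- arXiv:2109.06778 — 5 statements merged into one kernel-verified Lean document; each statement's English description precedes it below -/
import Mathlib

section
/- The volume of the polytope {(t_2, t_3, t_4, t_5, t_6) ∈ ℝ_{≥0}^5 : t_2 + 2t_3 + 2t_4 + 2t_5 + 2t_6 ≤ 1 and t_3 + 2t_4 + 4t_5 + 3t_6 ≤ 1} equals 13/34560. -/
open MeasureTheory Set
open scoped ENNReal


lemma integral_quartic (l u A B C D E : ℝ) :
    ∫ y in l..u, (A + B*y + C*y^2 + D*y^3 + E*y^4) =
      (A*u + B*u^2/2 + C*u^3/3 + D*u^4/4 + E*u^5/5)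
        - (A*l + B*l^2/2 + C*l^3/3 + D*l^4/4 + E*l^5/5) := by
  apply intervalIntegral.integral_eq_sub_of_hasDerivAt
  · intro x _
    have h : HasDerivAt (fun y : ℝ => A*y + B*y^2/2 + C*y^3/3 + D*y^4/4 + E*y^5/5)
        (A*1 + B*(2*x^1)/2 + C*(3*x^2)/3 + D*(4*x^3)/4 + E*(5*x^4)/5) x := by
      have h1 : HasDerivAt (fun y : ℝ => A*y) (A*1) x := by
        simpa using (hasDerivAt_id x).const_mul A
      exact (((h1.add (((hasDerivAt_pow 2 x).const_mul B).div_const 2)).add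
        (((hasDerivAt_pow 3 x).const_mul C).div_const 3)).add
        (((hasDerivAt_pow 4 x).const_mul D).div_const 4)).add
        (((hasDerivAt_pow 5 x).const_mul E).div_const 5)
    refine h.congr_deriv ?_
    ring
  · apply Continuous.intervalIntegrable
    fun_prop

lemma quartic_nonneg {l u A B C D E : ℝ} (h : l ≤ u)
    (hnn : ∀ y ∈ Icc l u, 0 ≤ A + B*y + C*y^2 + D*y^3 + E*y^4) :
    0 ≤ (A*u + B*u^2/2 + C*u^3/3 + D*u^4/4 + E*u^5/5)
        - (A*l + B*l^2/2 + C*l^3/3 + D*l^4/4 + E*l^5/5) := by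
  rw [← integral_quartic]
  exact intervalIntegral.integral_nonneg h hnn

lemma lint_piece {l u A B C D E : ℝ} (h : l ≤ u) {g : ℝ → ℝ}
    (hg : ∀ y ∈ Ioc l u, g y = A + B*y + C*y^2 + D*y^3 + E*y^4)
    (hnn : ∀ y ∈ Icc l u, 0 ≤ A + B*y + C*y^2 + D*y^3 + E*y^4) :
    ∫⁻ y in Ioc l u, ENNReal.ofReal (g y) =
      ENNReal.ofReal ((A*u + B*u^2/2 + C*u^3/3 + D*u^4/4 + E*u^5/5)
        - (A*l + B*l^2/2 + C*l^3/3 + D*l^4/4 + E*l^5/5)) := by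
  rw [setLIntegral_congr_fun measurableSet_Ioc
    (fun y hy => by rw [hg y hy])]
  have hint : Integrable (fun y => A + B*y + C*y^2 + D*y^3 + E*y^4)
      (volume.restrict (Ioc l u)) :=
    ((Continuous.integrableOn_Icc (by fun_prop)).mono_set Ioc_subset_Icc_self)
  have hae : 0 ≤ᶠ[ae (volume.restrict (Ioc l u))]
      (fun y => A + B*y + C*y^2 + D*y^3 + E*y^4) :=
    (ae_restrict_iff' measurableSet_Ioc).mpr
      (ae_of_all _ fun y hy => hnn y (Ioc_subset_Icc_self hy))
  rw [← ofReal_integral_eq_lintegral_ofReal hint hae]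
  rw [← intervalIntegral.integral_of_le h, integral_quartic]

lemma lint_Ioc_split {l m u : ℝ} (h1 : l ≤ m) (h2 : m ≤ u) (g : ℝ → ℝ≥0∞) :
    ∫⁻ y in Ioc l u, g y = (∫⁻ y in Ioc l m, g y) + ∫⁻ y in Ioc m u, g y := by
  rw [← Ioc_union_Ioc_eq_Ioc h1 h2, lintegral_union measurableSet_Ioc (Ioc_disjoint_Ioc_of_le le_rfl)]

lemma lint_Ici_Ioc {K : ℝ} (hK : 0 ≤ K) {g : ℝ → ℝ≥0∞} (h0 : ∀ y, K < y → g y = 0) :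
    ∫⁻ y in Ici (0:ℝ), g y = ∫⁻ y in Ioc 0 K, g y := by
  have h1 : ∫⁻ y in Ici (0:ℝ), g y = ∫⁻ y in Ioi 0, g y :=
    (setLIntegral_congr Ioi_ae_eq_Ici).symm
  rw [h1, ← Ioc_union_Ioi_eq_Ioi hK,
    lintegral_union measurableSet_Ioi Ioc_disjoint_Ioi_same]
  have h2 : ∫⁻ y in Ioi K, g y = 0 := by
    rw [setLIntegral_congr_fun measurableSet_Ioi (fun y hy => h0 y hy),
      lintegral_zero]
  rw [h2, add_zero]

lemma lint_ind (g : ℝ → ℝ≥0∞) :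
    ∫⁻ y : ℝ, (if 0 ≤ y then g y else 0) = ∫⁻ y in Ici (0:ℝ), g y := by
  rw [← lintegral_indicator measurableSet_Ici]
  refine lintegral_congr fun y => ?_
  by_cases h : (0:ℝ) ≤ y <;> simp [Set.indicator, h]

lemma ofReal_max0 (x : ℝ) : ENNReal.ofReal (max 0 x) = ENNReal.ofReal x := by
  rcases le_total 0 x with h | h
  · rw [max_eq_right h]
  · rw [max_eq_left h, ENNReal.ofReal_zero, eq_comm, ENNReal.ofReal_eq_zero]
    exact h

noncomputable def A1 (b c d e : ℝ) : ℝ :=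
  if b+2*c+4*d+3*e ≤ 1 then max 0 (1-2*(b+c+d+e)) else 0

noncomputable def M1 (c d e : ℝ) : ℝ := max 0 (min (1-2*c-4*d-3*e) (1/2-c-d-e))

noncomputable def G1 (c d e : ℝ) : ℝ := (1-2*(c+d+e)) * M1 c d e - (M1 c d e)^2

noncomputable def G2 (d e : ℝ) : ℝ :=
  if 1 < 4*d+3*e then 0
  else if 3*d+2*e ≤ 1/2 then (1/2-d-e)^3/3 - (2*d+e)^3/12
  else (2*d+e)*((1-4*d-3*e)/2)^2

noncomputable def G3 (e : ℝ) : ℝ :=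
  if e ≤ 1/4 then 5/1152 - 11*e/288 + 23*e^2/192 - 47*e^3/288 + 107*e^4/1152
  else if e ≤ 1/3 then 1/384 - e/96 - 3*e^2/64 + 9*e^3/32 - 45*e^4/128
  else 0

lemma L1 (c d e : ℝ) :
    ∫⁻ b in Ici (0:ℝ), ENNReal.ofReal (A1 b c d e) = ENNReal.ofReal (G1 c d e) := by
  set uA : ℝ := 1-2*c-4*d-3*e with huA
  set uB : ℝ := 1/2-c-d-e with huB
  rcases le_or_gt (min uA uB) 0 with hm | hm
  · have h0 : ∀ y ∈ Ioi (0:ℝ), ENNReal.ofReal (A1 y c d e) = 0 := by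
      intro b hb
      simp only [mem_Ioi] at hb
      unfold A1
      split_ifs with h
      · rcases le_total uA uB with h' | h'
        · rw [min_eq_left h'] at hm
          exfalso; simp only [huA] at hm; linarith
        · rw [min_eq_right h'] at hm
          rw [max_eq_left (by simp only [huB] at hm; linarith), ENNReal.ofReal_zero]
      · exact ENNReal.ofReal_zero
    have h1 : ∫⁻ y in Ici (0:ℝ), ENNReal.ofReal (A1 y c d e)
        = ∫⁻ y in Ioi 0, ENNReal.ofReal (A1 y c d e) :=
      (setLIntegral_congr Ioi_ae_eq_Ici).symm
    rw [h1, setLIntegral_congr_fun measurableSet_Ioi h0, lintegral_zero]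
    have : M1 c d e = 0 := max_eq_left hm
    simp [G1, this]
  · rw [lint_Ici_Ioc hm.le (fun y hy => ?_), lint_piece (l := 0) (u := min uA uB)
      (A := 1-2*(c+d+e)) (B := -2) (C := 0) (D := 0) (E := 0) hm.le ?_ ?_]
    · congr 1
      have : M1 c d e = min uA uB := max_eq_right hm.le
      simp only [G1, this]
      ring
    · -- hg
      intro y hy
      obtain ⟨hy1, hy2⟩ := hy
      have hA := le_trans hy2 (min_le_left uA uB)
      have hB := le_trans hy2 (min_le_right uA uB)
      unfold A1
      rw [if_pos (by simp only [huA] at hA; linarith),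
        max_eq_right (by simp only [huB] at hB; linarith)]
      ring
    · -- hnn
      intro y hy
      obtain ⟨hy1, hy2⟩ := hy
      have hB := le_trans hy2 (min_le_right uA uB)
      simp only [huB] at hB
      nlinarith
    · -- vanishing beyond min
      unfold A1
      split_ifs with h
      · rcases le_total uA uB with h' | h'
        · rw [min_eq_left h'] at hy
          exfalso; simp only [huA] at hy; linarith
        · rw [min_eq_right h'] at hy
          rw [max_eq_left (by simp only [huB] at hy; linarith), ENNReal.ofReal_zero]
      · exact ENNReal.ofReal_zero

lemma L2 (d e : ℝ) (hd : 0 ≤ d) (he : 0 ≤ e) :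
    ∫⁻ c in Ici (0:ℝ), ENNReal.ofReal (G1 c d e) = ENNReal.ofReal (G2 d e) := by
  by_cases hA : 1 < 4*d+3*e
  · have h0 : ∀ c ∈ Ici (0:ℝ), ENNReal.ofReal (G1 c d e) = 0 := by
      intro c hc
      simp only [mem_Ici] at hc
      have hM : M1 c d e = 0 :=
        max_eq_left (le_trans (min_le_left _ _) (by linarith))
      simp [G1, hM]
    rw [setLIntegral_congr_fun measurableSet_Ici h0, lintegral_zero]
    simp [G2, hA]
  · push_neg at hA
    have hMform : ∀ c : ℝ, 1/2-3*d-2*e ≤ c → c ≤ (1-4*d-3*e)/2 →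
        G1 c d e = (2*d+e)*(1-4*d-3*e) + (-(2*(2*d+e)))*c
          + 0*c^2 + 0*c^3 + 0*c^4 := by
      intro c h1 h2
      have hmin : min (1-2*c-4*d-3*e) (1/2-c-d-e) = 1-2*c-4*d-3*e :=
        min_eq_left (by linarith)
      have hM : M1 c d e = 1-2*c-4*d-3*e := by
        rw [M1, hmin]; exact max_eq_right (by linarith)
      simp only [G1, hM]; ring
    have hnn2 : ∀ l' : ℝ, ∀ y ∈ Icc l' ((1-4*d-3*e)/2),
        0 ≤ (2*d+e)*(1-4*d-3*e) + (-(2*(2*d+e)))*y + 0*y^2 + 0*y^3 + 0*y^4 := by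
      intro l' y hy
      obtain ⟨hy1, hy2⟩ := hy
      nlinarith [mul_nonneg (by linarith : (0:ℝ) ≤ 2*d+e)
        (by linarith : (0:ℝ) ≤ 1-4*d-3*e-2*y)]
    have hvanish : ∀ y : ℝ, (1-4*d-3*e)/2 < y → ENNReal.ofReal (G1 y d e) = 0 := by
      intro y hy
      have hM : M1 y d e = 0 :=
        max_eq_left (le_trans (min_le_left _ _) (by linarith))
      simp [G1, hM]
    by_cases hB : 3*d+2*e ≤ 1/2
    · have hc0 : (0:ℝ) ≤ 1/2-3*d-2*e := by linarith
      have hcK : 1/2-3*d-2*e ≤ (1-4*d-3*e)/2 := by linarith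
      have hK0 : (0:ℝ) ≤ (1-4*d-3*e)/2 := by linarith
      have hnn1 : ∀ y ∈ Icc (0:ℝ) (1/2-3*d-2*e),
          0 ≤ (1/2-d-e)^2 + (-(1-2*d-2*e))*y + 1*y^2 + 0*y^3 + 0*y^4 := by
        intro y _
        nlinarith [sq_nonneg (1/2-d-e-y)]
      have hp1 : ∫⁻ y in Ioc (0:ℝ) (1/2-3*d-2*e), ENNReal.ofReal (G1 y d e)
          = ENNReal.ofReal (((1/2-d-e)^2*(1/2-3*d-2*e) + (-(1-2*d-2*e))*(1/2-3*d-2*e)^2/2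
            + 1*(1/2-3*d-2*e)^3/3 + 0*(1/2-3*d-2*e)^4/4 + 0*(1/2-3*d-2*e)^5/5)
            - ((1/2-d-e)^2*0 + (-(1-2*d-2*e))*0^2/2 + 1*0^3/3 + 0*0^4/4 + 0*0^5/5)) := by
        apply lint_piece hc0 _ hnn1
        intro y hy
        obtain ⟨hy1, hy2⟩ := hy
        have hmin : min (1-2*y-4*d-3*e) (1/2-y-d-e) = 1/2-y-d-e :=
          min_eq_right (by linarith)
        have hM : M1 y d e = 1/2-y-d-e := by
          rw [M1, hmin]; exact max_eq_right (by linarith)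
        simp only [G1, hM]; ring
      have hp2 : ∫⁻ y in Ioc (1/2-3*d-2*e) ((1-4*d-3*e)/2), ENNReal.ofReal (G1 y d e)
          = ENNReal.ofReal (((2*d+e)*(1-4*d-3*e)*((1-4*d-3*e)/2) + (-(2*(2*d+e)))*((1-4*d-3*e)/2)^2/2
            + 0*((1-4*d-3*e)/2)^3/3 + 0*((1-4*d-3*e)/2)^4/4 + 0*((1-4*d-3*e)/2)^5/5)
            - ((2*d+e)*(1-4*d-3*e)*(1/2-3*d-2*e) + (-(2*(2*d+e)))*(1/2-3*d-2*e)^2/2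
            + 0*(1/2-3*d-2*e)^3/3 + 0*(1/2-3*d-2*e)^4/4 + 0*(1/2-3*d-2*e)^5/5)) := by
        apply lint_piece hcK _ (hnn2 _)
        intro y hy
        obtain ⟨hy1, hy2⟩ := hy
        exact hMform y hy1.le hy2
      rw [lint_Ici_Ioc hK0 hvanish, lint_Ioc_split hc0 hcK, hp1, hp2,
        ← ENNReal.ofReal_add (quartic_nonneg hc0 hnn1) (quartic_nonneg hcK (hnn2 _))]
      congr 1
      simp only [G2, if_neg (not_lt.mpr hA), if_pos hB]
      ring
    · push_neg at hB
      have hK0 : (0:ℝ) ≤ (1-4*d-3*e)/2 := by linarith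
      have hp2 : ∫⁻ y in Ioc (0:ℝ) ((1-4*d-3*e)/2), ENNReal.ofReal (G1 y d e)
          = ENNReal.ofReal (((2*d+e)*(1-4*d-3*e)*((1-4*d-3*e)/2) + (-(2*(2*d+e)))*((1-4*d-3*e)/2)^2/2
            + 0*((1-4*d-3*e)/2)^3/3 + 0*((1-4*d-3*e)/2)^4/4 + 0*((1-4*d-3*e)/2)^5/5)
            - ((2*d+e)*(1-4*d-3*e)*0 + (-(2*(2*d+e)))*0^2/2
            + 0*0^3/3 + 0*0^4/4 + 0*0^5/5)) := by
        apply lint_piece hK0 _ (hnn2 _)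
        intro y hy
        obtain ⟨hy1, hy2⟩ := hy
        exact hMform y (by linarith) hy2
      rw [lint_Ici_Ioc hK0 hvanish, hp2]
      congr 1
      simp only [G2, if_neg (not_lt.mpr hA), if_neg (not_le.mpr hB)]
      ring

lemma L3 (e : ℝ) (he : 0 ≤ e) :
    ∫⁻ d in Ici (0:ℝ), ENNReal.ofReal (G2 d e) = ENNReal.ofReal (G3 e) := by
  by_cases h3 : 1/3 < e
  · have h0 : ∀ d ∈ Ici (0:ℝ), ENNReal.ofReal (G2 d e) = 0 := by
      intro d hd
      simp only [mem_Ici] at hd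
      simp [G2, show 1 < 4*d+3*e by linarith]
    rw [setLIntegral_congr_fun measurableSet_Ici h0, lintegral_zero,
      G3, if_neg (show ¬ e ≤ 1/4 by linarith), if_neg (show ¬ e ≤ 1/3 by linarith),
      ENNReal.ofReal_zero]
  · push_neg at h3
    have hvanish : ∀ y : ℝ, (1-3*e)/4 < y → ENNReal.ofReal (G2 y e) = 0 := by
      intro y hy
      simp [G2, show 1 < 4*y+3*e by linarith]
    have hdA0 : (0:ℝ) ≤ (1-3*e)/4 := by linarith
    have hnnb : ∀ l' : ℝ, 0 ≤ l' → ∀ y ∈ Icc l' ((1-3*e)/4),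
        0 ≤ (e/4 - 3*e^2/2 + 9*e^3/4) + (1/2 - 5*e + 21*e^2/2)*y
          + (-4 + 16*e)*y^2 + 8*y^3 + 0*y^4 := by
      intro l' hl' y hy
      obtain ⟨hy1, hy2⟩ := hy
      nlinarith [mul_nonneg (by linarith : (0:ℝ) ≤ 2*y+e) (sq_nonneg (1-4*y-3*e))]
    have hgb : ∀ l' : ℝ, (∀ y, l' < y → 1/2 < 3*y+2*e) → ∀ y ∈ Ioc l' ((1-3*e)/4),
        G2 y e = (e/4 - 3*e^2/2 + 9*e^3/4) + (1/2 - 5*e + 21*e^2/2)*y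
          + (-4 + 16*e)*y^2 + 8*y^3 + 0*y^4 := by
      intro l' hl y hy
      obtain ⟨hy1, hy2⟩ := hy
      rw [G2, if_neg (not_lt.mpr (by linarith)), if_neg (not_le.mpr (hl y hy1))]
      ring
    by_cases h4 : 1/4 ≤ e
    · -- single piece [0, dA]
      have hp : ∫⁻ y in Ioc (0:ℝ) ((1-3*e)/4), ENNReal.ofReal (G2 y e)
          = ENNReal.ofReal (((e/4 - 3*e^2/2 + 9*e^3/4)*((1-3*e)/4)
              + (1/2 - 5*e + 21*e^2/2)*((1-3*e)/4)^2/2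
              + (-4 + 16*e)*((1-3*e)/4)^3/3 + 8*((1-3*e)/4)^4/4 + 0*((1-3*e)/4)^5/5)
            - ((e/4 - 3*e^2/2 + 9*e^3/4)*0 + (1/2 - 5*e + 21*e^2/2)*0^2/2
              + (-4 + 16*e)*0^3/3 + 8*0^4/4 + 0*0^5/5)) := by
        apply lint_piece hdA0 (hgb 0 fun y hy => by linarith) (hnnb 0 le_rfl)
      rw [lint_Ici_Ioc hdA0 hvanish, hp]
      rcases eq_or_lt_of_le h4 with heq | hlt
      · rw [← heq]
        rw [show G3 (1/4) = 5/1152 - 11*(1/4)/288 + 23*(1/4)^2/192 - 47*(1/4)^3/288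
            + 107*(1/4)^4/1152 from by rw [G3, if_pos le_rfl]]
        congr 1
        norm_num
      · rw [G3, if_neg (not_le.mpr hlt), if_pos h3]
        congr 1
        ring
    · push_neg at h4
      have hds0 : (0:ℝ) ≤ 1/6-2*e/3 := by linarith
      have hdsA : 1/6-2*e/3 ≤ (1-3*e)/4 := by linarith
      have hnna : ∀ y ∈ Icc (0:ℝ) (1/6-2*e/3),
          0 ≤ (1/24 - e/4 + e^2/2 - 5*e^3/12) + (-1/4 + e - 3*e^2/2)*y
            + (1/2 - 2*e)*y^2 + (-1)*y^3 + 0*y^4 := by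
        intro y hy
        obtain ⟨hy1, hy2⟩ := hy
        have hs : (0:ℝ) ≤ 2*y+e := by linarith
        have hts : 2*y+e ≤ 1/2-y-e := by linarith
        have h1 : (2*y+e)^3 ≤ (1/2-y-e)^3 := by
          nlinarith [sq_nonneg (2*y+e), sq_nonneg (1/2-y-e),
            mul_nonneg hs (by linarith : (0:ℝ) ≤ 1/2-y-e)]
        have h2 : (0:ℝ) ≤ (2*y+e)^3 := pow_nonneg hs 3
        have hexp : (1/24 - e/4 + e^2/2 - 5*e^3/12) + (-1/4 + e - 3*e^2/2)*y
            + (1/2 - 2*e)*y^2 + (-1)*y^3 + 0*y^4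
            = ((1/2-y-e)^3*4 - (2*y+e)^3)/12 := by ring
        rw [hexp]; linarith
      have hp1 : ∫⁻ y in Ioc (0:ℝ) (1/6-2*e/3), ENNReal.ofReal (G2 y e)
          = ENNReal.ofReal (((1/24 - e/4 + e^2/2 - 5*e^3/12)*(1/6-2*e/3)
              + (-1/4 + e - 3*e^2/2)*(1/6-2*e/3)^2/2 + (1/2 - 2*e)*(1/6-2*e/3)^3/3
              + (-1)*(1/6-2*e/3)^4/4 + 0*(1/6-2*e/3)^5/5)
            - ((1/24 - e/4 + e^2/2 - 5*e^3/12)*0 + (-1/4 + e - 3*e^2/2)*0^2/2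
              + (1/2 - 2*e)*0^3/3 + (-1)*0^4/4 + 0*0^5/5)) := by
        apply lint_piece hds0 _ hnna
        intro y hy
        obtain ⟨hy1, hy2⟩ := hy
        rw [G2, if_neg (not_lt.mpr (by linarith)), if_pos (by linarith)]
        ring
      have hp2 : ∫⁻ y in Ioc (1/6-2*e/3) ((1-3*e)/4), ENNReal.ofReal (G2 y e)
          = ENNReal.ofReal (((e/4 - 3*e^2/2 + 9*e^3/4)*((1-3*e)/4)
              + (1/2 - 5*e + 21*e^2/2)*((1-3*e)/4)^2/2
              + (-4 + 16*e)*((1-3*e)/4)^3/3 + 8*((1-3*e)/4)^4/4 + 0*((1-3*e)/4)^5/5)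
            - ((e/4 - 3*e^2/2 + 9*e^3/4)*(1/6-2*e/3)
              + (1/2 - 5*e + 21*e^2/2)*(1/6-2*e/3)^2/2
              + (-4 + 16*e)*(1/6-2*e/3)^3/3 + 8*(1/6-2*e/3)^4/4 + 0*(1/6-2*e/3)^5/5)) := by
        apply lint_piece hdsA (hgb _ fun y hy => by linarith) (hnnb _ hds0)
      rw [lint_Ici_Ioc hdA0 hvanish, lint_Ioc_split hds0 hdsA, hp1, hp2,
        ← ENNReal.ofReal_add (quartic_nonneg hds0 hnna) (quartic_nonneg hdsA (hnnb _ hds0))]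
      rw [G3, if_pos (by linarith : e ≤ 1/4)]
      congr 1
      ring

lemma P1nn : ∀ y ∈ Icc (0:ℝ) (1/4),
    0 ≤ (5/1152 : ℝ) + (-11/288)*y + (23/192)*y^2 + (-47/288)*y^3 + (107/1152)*y^4 := by
  intro y hy
  obtain ⟨h1, h2⟩ := hy
  nlinarith [sq_nonneg y, sq_nonneg (y-1/4), sq_nonneg (y^2-y/4),
    mul_nonneg h1 (by linarith : (0:ℝ) ≤ 1/4-y), sq_nonneg (y*(1/4-y))]

lemma P2nn : ∀ y ∈ Icc (1/4 : ℝ) (1/3),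
    0 ≤ (1/384 : ℝ) + (-1/96)*y + (-3/64)*y^2 + (9/32)*y^3 + (-45/128)*y^4 := by
  intro y hy
  obtain ⟨h1, h2⟩ := hy
  have h : (1/384 : ℝ) + (-1/96)*y + (-3/64)*y^2 + (9/32)*y^3 + (-45/128)*y^4
      = (1/3-y)^2*((1-3*y)*(1+5*y))*(3/128) := by ring
  rw [h]
  apply mul_nonneg (mul_nonneg (sq_nonneg _) (mul_nonneg (by linarith) (by linarith)))
  norm_num

lemma L4 : ∫⁻ e in Ici (0:ℝ), ENNReal.ofReal (G3 e) = ENNReal.ofReal (13/34560) := by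
  have hvanish : ∀ y : ℝ, (1/3:ℝ) < y → ENNReal.ofReal (G3 y) = 0 := by
    intro y hy
    rw [G3, if_neg (by linarith), if_neg (by linarith), ENNReal.ofReal_zero]
  have h14 : (0:ℝ) ≤ 1/4 := by norm_num
  have h43 : (1/4:ℝ) ≤ 1/3 := by norm_num
  have h13 : (0:ℝ) ≤ 1/3 := by norm_num
  have hP1 : ∀ y ∈ Icc (0:ℝ) (1/4), (0:ℝ) ≤ (5/1152 : ℝ) + (-11/288)*y + (23/192)*y^2
      + (-47/288)*y^3 + (107/1152)*y^4 := P1nn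
  have hp1 : ∫⁻ y in Ioc (0:ℝ) (1/4), ENNReal.ofReal (G3 y)
      = ENNReal.ofReal (((5/1152)*(1/4:ℝ) + (-11/288)*(1/4)^2/2 + (23/192)*(1/4)^3/3
          + (-47/288)*(1/4)^4/4 + (107/1152)*(1/4)^5/5)
        - ((5/1152)*0 + (-11/288)*0^2/2 + (23/192)*0^3/3 + (-47/288)*0^4/4 + (107/1152)*0^5/5)) := by
    apply lint_piece h14 _ P1nn
    intro y hy
    rw [G3, if_pos hy.2]
    ring
  have hp2 : ∫⁻ y in Ioc (1/4:ℝ) (1/3), ENNReal.ofReal (G3 y)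
      = ENNReal.ofReal (((1/384)*(1/3:ℝ) + (-1/96)*(1/3)^2/2 + (-3/64)*(1/3)^3/3
          + (9/32)*(1/3)^4/4 + (-45/128)*(1/3)^5/5)
        - ((1/384)*(1/4:ℝ) + (-1/96)*(1/4)^2/2 + (-3/64)*(1/4)^3/3
          + (9/32)*(1/4)^4/4 + (-45/128)*(1/4)^5/5)) := by
    apply lint_piece h43 _ P2nn
    intro y hy
    rw [G3, if_neg (not_le.mpr hy.1), if_pos hy.2]
    ring
  rw [lint_Ici_Ioc h13 hvanish, lint_Ioc_split h14 h43, hp1, hp2,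
    ← ENNReal.ofReal_add (quartic_nonneg h14 P1nn) (quartic_nonneg h43 P2nn)]
  congr 1
  norm_num

lemma lint_if' (P : Prop) [Decidable P] (f : ℝ → ℝ≥0∞) (v : ℝ≥0∞)
    (h : P → (∫⁻ y : ℝ, f y) = v) :
    (∫⁻ y : ℝ, if P then f y else 0) = if P then v else 0 := by
  by_cases hP : P
  · simp only [if_pos hP]; exact h hP
  · simp only [if_neg hP, lintegral_zero]

lemma L0 (b c d e : ℝ) :
    (∫⁻ a : ℝ, (if 0 ≤ a ∧ 0 ≤ b ∧ 0 ≤ c ∧ 0 ≤ d ∧ 0 ≤ e ∧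
        a+2*b+2*c+2*d+2*e ≤ 1 ∧ b+2*c+4*d+3*e ≤ 1 then (1:ℝ≥0∞) else 0))
      = if 0 ≤ c then (if 0 ≤ d then (if 0 ≤ e then
          (if 0 ≤ b then ENNReal.ofReal (A1 b c d e) else 0) else 0) else 0) else 0 := by
  by_cases hc : 0 ≤ c; swap
  · rw [lintegral_congr (g := fun _ : ℝ => (0:ℝ≥0∞))
      (fun a => if_neg (fun hcon => hc hcon.2.2.1)), lintegral_zero, if_neg hc]
  by_cases hd : 0 ≤ d; swap
  · rw [lintegral_congr (g := fun _ : ℝ => (0:ℝ≥0∞))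
      (fun a => if_neg (fun hcon => hd hcon.2.2.2.1)), lintegral_zero, if_pos hc, if_neg hd]
  by_cases he : 0 ≤ e; swap
  · rw [lintegral_congr (g := fun _ : ℝ => (0:ℝ≥0∞))
      (fun a => if_neg (fun hcon => he hcon.2.2.2.2.1)), lintegral_zero,
      if_pos hc, if_pos hd, if_neg he]
  by_cases hb : 0 ≤ b; swap
  · rw [lintegral_congr (g := fun _ : ℝ => (0:ℝ≥0∞))
      (fun a => if_neg (fun hcon => hb hcon.2.1)), lintegral_zero,
      if_pos hc, if_pos hd, if_pos he, if_neg hb]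
  rw [if_pos hc, if_pos hd, if_pos he, if_pos hb]
  by_cases hC2 : b+2*c+4*d+3*e ≤ 1; swap
  · rw [lintegral_congr (g := fun _ : ℝ => (0:ℝ≥0∞))
      (fun a => if_neg (fun hcon => hC2 hcon.2.2.2.2.2.2)), lintegral_zero,
      A1, if_neg hC2, ENNReal.ofReal_zero]
  have hcongr : ∀ a : ℝ, (if 0 ≤ a ∧ 0 ≤ b ∧ 0 ≤ c ∧ 0 ≤ d ∧ 0 ≤ e ∧
      a+2*b+2*c+2*d+2*e ≤ 1 ∧ b+2*c+4*d+3*e ≤ 1 then (1:ℝ≥0∞) else 0)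
      = (Icc (0:ℝ) (1-2*(b+c+d+e))).indicator (1 : ℝ → ℝ≥0∞) a := by
    intro a
    by_cases ha : a ∈ Icc (0:ℝ) (1-2*(b+c+d+e))
    · rw [Set.indicator_of_mem ha, Pi.one_apply,
        if_pos ⟨ha.1, hb, hc, hd, he, by linarith [ha.2], hC2⟩]
    · rw [Set.indicator_of_notMem ha, if_neg]
      intro hcon
      exact ha ⟨hcon.1, by linarith [hcon.2.2.2.2.2.1]⟩
  rw [lintegral_congr hcongr, lintegral_indicator_one measurableSet_Icc,
    Real.volume_Icc, A1, if_pos hC2, sub_zero, ofReal_max0]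

lemma L1' (c d e : ℝ) :
    (∫⁻ b : ℝ, if 0 ≤ c then (if 0 ≤ d then (if 0 ≤ e then
        (if 0 ≤ b then ENNReal.ofReal (A1 b c d e) else 0) else 0) else 0) else 0)
      = if 0 ≤ c then (if 0 ≤ d then (if 0 ≤ e then
          ENNReal.ofReal (G1 c d e) else 0) else 0) else 0 := by
  refine lint_if' _ _ _ (fun _ => ?_)
  refine lint_if' _ _ _ (fun _ => ?_)
  refine lint_if' _ _ _ (fun _ => ?_)
  rw [lint_ind]
  exact L1 c d e

lemma L2' (d e : ℝ) :
    (∫⁻ c : ℝ, if 0 ≤ c then (if 0 ≤ d then (if 0 ≤ e then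
        ENNReal.ofReal (G1 c d e) else 0) else 0) else 0)
      = if 0 ≤ d then (if 0 ≤ e then ENNReal.ofReal (G2 d e) else 0) else 0 := by
  have hre : ∀ c : ℝ, (if 0 ≤ c then (if 0 ≤ d then (if 0 ≤ e then
      ENNReal.ofReal (G1 c d e) else 0) else 0) else 0)
      = (if 0 ≤ d then (if 0 ≤ e then
          (if 0 ≤ c then ENNReal.ofReal (G1 c d e) else 0) else 0) else 0) := by
    intro c
    by_cases h1 : 0 ≤ c <;> by_cases h2 : 0 ≤ d <;> by_cases h3 : 0 ≤ e <;>
      simp [h1, h2, h3]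
  rw [lintegral_congr hre]
  refine lint_if' _ _ _ (fun hd => ?_)
  refine lint_if' _ _ _ (fun he => ?_)
  rw [lint_ind]
  exact L2 d e hd he

lemma L3' (e : ℝ) :
    (∫⁻ d : ℝ, if 0 ≤ d then (if 0 ≤ e then
        ENNReal.ofReal (G2 d e) else 0) else 0)
      = if 0 ≤ e then ENNReal.ofReal (G3 e) else 0 := by
  have hre : ∀ d : ℝ, (if 0 ≤ d then (if 0 ≤ e then
      ENNReal.ofReal (G2 d e) else 0) else 0)
      = (if 0 ≤ e then (if 0 ≤ d then ENNReal.ofReal (G2 d e) else 0) else 0) := by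
    intro d
    by_cases h1 : 0 ≤ d <;> by_cases h2 : 0 ≤ e <;> simp [h1, h2]
  rw [lintegral_congr hre]
  refine lint_if' _ _ _ (fun he => ?_)
  rw [lint_ind]
  exact L3 e he

/-- The volume of `{t ∈ ℝ_{≥0}^5 : t₂+2t₃+2t₄+2t₅+2t₆ ≤ 1, t₃+2t₄+4t₅+3t₆ ≤ 1}` is `13/34560`. -/
theorem stmt_1 :
    volume {t : Fin 5 → ℝ | (∀ i, 0 ≤ t i) ∧
      t 0 + 2 * t 1 + 2 * t 2 + 2 * t 3 + 2 * t 4 ≤ 1 ∧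
      t 1 + 2 * t 2 + 4 * t 3 + 3 * t 4 ≤ 1} = 13 / 34560 := by
  set S : Set (Fin 5 → ℝ) := {t : Fin 5 → ℝ | (∀ i, 0 ≤ t i) ∧
      t 0 + 2 * t 1 + 2 * t 2 + 2 * t 3 + 2 * t 4 ≤ 1 ∧
      t 1 + 2 * t 2 + 4 * t 3 + 3 * t 4 ≤ 1} with hSdef
  have hS : MeasurableSet S := by
    have : S = (⋂ i, {t : Fin 5 → ℝ | 0 ≤ t i}) ∩
        ({t : Fin 5 → ℝ | t 0 + 2 * t 1 + 2 * t 2 + 2 * t 3 + 2 * t 4 ≤ 1} ∩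
         {t : Fin 5 → ℝ | t 1 + 2 * t 2 + 4 * t 3 + 3 * t 4 ≤ 1}) := by
      ext t
      simp only [hSdef, mem_setOf_eq, mem_inter_iff, mem_iInter]
      try tauto
    rw [this]
    exact (MeasurableSet.iInter fun i =>
        measurableSet_le measurable_const (measurable_pi_apply i)).inter
      ((measurableSet_le (by fun_prop) measurable_const).inter
        (measurableSet_le (by fun_prop) measurable_const))
  have hf : Measurable (S.indicator (1 : (Fin 5 → ℝ) → ℝ≥0∞)) :=
    measurable_one.indicator hS
  have key : ∀ (a b c d e : ℝ),
      S.indicator (1 : (Fin 5 → ℝ) → ℝ≥0∞)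
        (Function.update (Function.update (Function.update (Function.update
          (Function.update (fun _ : Fin 5 => (0:ℝ)) 4 e) 3 d) 2 c) 1 b) 0 a)
      = if (0 ≤ a ∧ 0 ≤ b ∧ 0 ≤ c ∧ 0 ≤ d ∧ 0 ≤ e ∧
          a+2*b+2*c+2*d+2*e ≤ 1 ∧ b+2*c+4*d+3*e ≤ 1) then 1 else 0 := by
    intro a b c d e
    set t : Fin 5 → ℝ := Function.update (Function.update (Function.update
      (Function.update (Function.update (fun _ : Fin 5 => (0:ℝ)) 4 e) 3 d) 2 c) 1 b) 0 a
      with ht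
    have h0 : t 0 = a := by simp [ht, Function.update_apply]
    have h1 : t 1 = b := by simp [ht, Function.update_apply]
    have h2 : t 2 = c := by simp [ht, Function.update_apply]
    have h3 : t 3 = d := by simp [ht, Function.update_apply]
    have h4 : t 4 = e := by simp [ht, Function.update_apply]
    have hmem : t ∈ S ↔ (0 ≤ a ∧ 0 ≤ b ∧ 0 ≤ c ∧ 0 ≤ d ∧ 0 ≤ e ∧
        a+2*b+2*c+2*d+2*e ≤ 1 ∧ b+2*c+4*d+3*e ≤ 1) := by
      simp only [hSdef, mem_setOf_eq, h0, h1, h2, h3, h4]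
      constructor
      · rintro ⟨hn, hA, hB⟩
        exact ⟨h0 ▸ hn 0, h1 ▸ hn 1, h2 ▸ hn 2, h3 ▸ hn 3, h4 ▸ hn 4,
          by linarith, by linarith⟩
      · rintro ⟨ha, hb, hc, hd, he, hA, hB⟩
        refine ⟨fun i => ?_, by linarith, by linarith⟩
        fin_cases i
        · exact h0 ▸ ha
        · exact h1 ▸ hb
        · exact h2 ▸ hc
        · exact h3 ▸ hd
        · exact h4 ▸ he
    rw [Set.indicator_apply]
    simp only [Pi.one_apply]
    exact if_congr hmem rfl rfl
  rw [← lintegral_indicator_one hS, volume_pi,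
    lintegral_eq_lmarginal_univ (fun _ : Fin 5 => (0:ℝ))]
  rw [show (Finset.univ : Finset (Fin 5))
      = insert 4 (insert 3 (insert 2 (insert 1 {0}))) from by decide]
  rw [lmarginal_insert _ hf (by decide)]
  simp only [lmarginal_insert _ hf (show (3:Fin 5) ∉ (insert 2 (insert 1 {0}) : Finset (Fin 5)) from by decide)]
  simp only [lmarginal_insert _ hf (show (2:Fin 5) ∉ (insert 1 {0} : Finset (Fin 5)) from by decide)]
  simp only [lmarginal_insert _ hf (show (1:Fin 5) ∉ ({0} : Finset (Fin 5)) from by decide)]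
  simp only [lmarginal_singleton]
  simp only [key]
  simp only [L0, L1', L2', L3']
  rw [lint_ind, L4]
  rw [ENNReal.ofReal_div_of_pos (by norm_num)]
  norm_num
end

section
/- The volume of the polytope {(t_1, t_5, t_7) ∈ ℝ_{≥0}^3 : 2t_1 ≤ 1 and t_1 + 2t_5 + t_7 ≤ 1} equals 7/96. -/
open MeasureTheory Set

lemma slice1 (c : ℝ) (y : ℝ) :
    volume {z : ℝ | 0 ≤ y ∧ 0 ≤ z ∧ 2 * y + z ≤ c} =
      (Ici (0:ℝ)).indicator (fun y => ENNReal.ofReal (c - 2 * y)) y := by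
  rw [indicator_apply]
  split_ifs with h
  · have : {z : ℝ | 0 ≤ y ∧ 0 ≤ z ∧ 2 * y + z ≤ c} = Icc 0 (c - 2 * y) := by
      ext z; simp only [mem_setOf_eq, mem_Icc]
      constructor
      · rintro ⟨-, hz, hc⟩; exact ⟨hz, by linarith⟩
      · rintro ⟨hz, hc⟩; exact ⟨h, hz, by linarith⟩
    rw [this, Real.volume_Icc, sub_zero]
  · have : {z : ℝ | 0 ≤ y ∧ 0 ≤ z ∧ 2 * y + z ≤ c} = ∅ := by
      ext z; simp only [mem_setOf_eq, mem_empty_iff_false, iff_false]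
      rintro ⟨h0, -, -⟩; exact h (by simpa using h0)
    simp [this]

lemma inner_vol (c : ℝ) (hc : 0 ≤ c) :
    (volume.prod volume) {p : ℝ × ℝ | 0 ≤ p.1 ∧ 0 ≤ p.2 ∧ 2 * p.1 + p.2 ≤ c} =
      ENNReal.ofReal (c ^ 2 / 4) := by
  have m1 : Measurable (fun p : ℝ × ℝ => 2 * p.1 + p.2) :=
    (measurable_fst.const_mul 2).add measurable_snd
  have hmeas : MeasurableSet {p : ℝ × ℝ | 0 ≤ p.1 ∧ 0 ≤ p.2 ∧ 2 * p.1 + p.2 ≤ c} := by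
    apply MeasurableSet.inter
    · exact measurableSet_le measurable_const measurable_fst
    apply MeasurableSet.inter
    · exact measurableSet_le measurable_const measurable_snd
    · exact measurableSet_le m1 measurable_const
  rw [Measure.prod_apply hmeas]
  have h1 : ∀ y : ℝ, volume (Prod.mk y ⁻¹' {p : ℝ × ℝ | 0 ≤ p.1 ∧ 0 ≤ p.2 ∧ 2 * p.1 + p.2 ≤ c}) =
      (Ici (0:ℝ)).indicator (fun y => ENNReal.ofReal (c - 2 * y)) y := by
    intro y; exact slice1 c y
  simp_rw [h1]
  rw [lintegral_indicator measurableSet_Ici]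
  have hsplit : (Ici (0:ℝ)) = Icc 0 (c/2) ∪ Ioi (c/2) := by
    rw [Icc_union_Ioi_eq_Ici]; linarith
  rw [hsplit, lintegral_union measurableSet_Ioi]
  · have hz : ∫⁻ y in Ioi (c/2), ENNReal.ofReal (c - 2 * y) = 0 := by
      rw [setLIntegral_congr_fun measurableSet_Ioi
        (fun y hy => ?_), lintegral_zero]
      show ENNReal.ofReal (c - 2 * y) = 0
      rw [mem_Ioi] at hy
      exact ENNReal.ofReal_eq_zero.2 (by linarith)
    rw [hz, add_zero]
    rw [← ofReal_integral_eq_lintegral_ofReal]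
    · congr 1
      rw [integral_Icc_eq_integral_Ioc, ← intervalIntegral.integral_of_le (by linarith)]
      have : ∫ y in (0:ℝ)..(c/2), (c - 2 * y) = c * (c/2) - (c/2)^2 := by
        rw [intervalIntegral.integral_sub intervalIntegrable_const
            (IntervalIntegrable.const_mul _root_.intervalIntegral.intervalIntegrable_id 2),
          intervalIntegral.integral_const_mul, integral_id, intervalIntegral.integral_const,
          smul_eq_mul]
        ring
      rw [this]; ring
    · apply Continuous.integrableOn_Icc; fun_prop
    · filter_upwards [self_mem_ae_restrict measurableSet_Icc] with y hy
      simp only [mem_Icc] at hy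
      simp only [Pi.zero_apply]
      linarith [hy.2]
  · rw [disjoint_iff_inter_eq_empty]
    ext y; simp only [mem_inter_iff, mem_Icc, mem_Ioi, mem_empty_iff_false, iff_false]
    rintro ⟨⟨-, h2⟩, h3⟩; linarith

lemma slice2 (x : ℝ) :
    (volume.prod volume) (Prod.mk x ⁻¹' {p : ℝ × ℝ × ℝ |
      (0 ≤ p.1 ∧ 0 ≤ p.2.1 ∧ 0 ≤ p.2.2) ∧ 2 * p.1 ≤ 1 ∧ p.1 + 2 * p.2.1 + p.2.2 ≤ 1}) =
      (Icc (0:ℝ) (1/2)).indicator (fun x => ENNReal.ofReal ((1 - x) ^ 2 / 4)) x := by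
  rw [indicator_apply]
  split_ifs with h
  · rw [mem_Icc] at h
    have : (Prod.mk x ⁻¹' {p : ℝ × ℝ × ℝ |
        (0 ≤ p.1 ∧ 0 ≤ p.2.1 ∧ 0 ≤ p.2.2) ∧ 2 * p.1 ≤ 1 ∧ p.1 + 2 * p.2.1 + p.2.2 ≤ 1}) =
        {q : ℝ × ℝ | 0 ≤ q.1 ∧ 0 ≤ q.2 ∧ 2 * q.1 + q.2 ≤ 1 - x} := by
      ext q; simp only [mem_preimage, mem_setOf_eq]
      constructor
      · rintro ⟨⟨-, h1, h2⟩, -, h3⟩; exact ⟨h1, h2, by linarith⟩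
      · rintro ⟨h1, h2, h3⟩; exact ⟨⟨h.1, h1, h2⟩, by linarith [h.2], by linarith⟩
    rw [this, inner_vol (1 - x) (by linarith [h.2])]
  · rw [mem_Icc, not_and_or] at h
    have : (Prod.mk x ⁻¹' {p : ℝ × ℝ × ℝ |
        (0 ≤ p.1 ∧ 0 ≤ p.2.1 ∧ 0 ≤ p.2.2) ∧ 2 * p.1 ≤ 1 ∧ p.1 + 2 * p.2.1 + p.2.2 ≤ 1}) = ∅ := by
      ext q; simp only [mem_preimage, mem_setOf_eq, mem_empty_iff_false, iff_false]
      rintro ⟨⟨h1, -, -⟩, h2, -⟩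
      rcases h with h | h
      · exact h h1
      · exact h (by linarith)
    simp [this]

lemma prod_vol :
    (volume.prod (volume.prod volume)) {p : ℝ × ℝ × ℝ |
      (0 ≤ p.1 ∧ 0 ≤ p.2.1 ∧ 0 ≤ p.2.2) ∧ 2 * p.1 ≤ 1 ∧ p.1 + 2 * p.2.1 + p.2.2 ≤ 1} =
      7 / 96 := by
  have m1 : Measurable (fun p : ℝ × ℝ × ℝ => 2 * p.1) := measurable_fst.const_mul 2
  have m2 : Measurable (fun p : ℝ × ℝ × ℝ => p.1 + 2 * p.2.1 + p.2.2) :=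
    (measurable_fst.add (measurable_snd.fst.const_mul 2)).add measurable_snd.snd
  have hmeas : MeasurableSet {p : ℝ × ℝ × ℝ |
      (0 ≤ p.1 ∧ 0 ≤ p.2.1 ∧ 0 ≤ p.2.2) ∧ 2 * p.1 ≤ 1 ∧ p.1 + 2 * p.2.1 + p.2.2 ≤ 1} := by
    apply MeasurableSet.inter
    · apply MeasurableSet.inter
      · exact measurableSet_le measurable_const measurable_fst
      apply MeasurableSet.inter
      · exact measurableSet_le measurable_const (measurable_fst.comp measurable_snd)
      · exact measurableSet_le measurable_const (measurable_snd.comp measurable_snd)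
    apply MeasurableSet.inter
    · exact measurableSet_le m1 measurable_const
    · exact measurableSet_le m2 measurable_const
  rw [Measure.prod_apply hmeas]
  simp_rw [slice2]
  rw [lintegral_indicator measurableSet_Icc]
  rw [← ofReal_integral_eq_lintegral_ofReal]
  · have : ∫ x in Icc (0:ℝ) (1/2), (1 - x) ^ 2 / 4 = 7 / 96 := by
      rw [integral_Icc_eq_integral_Ioc, ← intervalIntegral.integral_of_le (by norm_num)]
      have expand : ∀ x : ℝ, (1 - x) ^ 2 / 4 = 1/4 - 1/2 * x + 1/4 * x ^ 2 := by
        intro x; ring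
      simp_rw [expand]
      rw [intervalIntegral.integral_add ((intervalIntegrable_const).sub
          (IntervalIntegrable.const_mul _root_.intervalIntegral.intervalIntegrable_id (1/2)))
          (IntervalIntegrable.const_mul (_root_.intervalIntegral.intervalIntegrable_pow 2) (1/4)),
        intervalIntegral.integral_sub intervalIntegrable_const
          (IntervalIntegrable.const_mul _root_.intervalIntegral.intervalIntegrable_id (1/2)),
        intervalIntegral.integral_const_mul, intervalIntegral.integral_const_mul,
        integral_id, integral_pow, intervalIntegral.integral_const, smul_eq_mul]
      norm_num
    rw [this]
    rw [ENNReal.ofReal_div_of_pos (by norm_num)]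
    norm_num
  · apply Continuous.integrableOn_Icc; fun_prop
  · filter_upwards with x
    positivity

/-- The volume of `{t ∈ ℝ_{≥0}^3 : 2t₁ ≤ 1, t₁+2t₅+t₇ ≤ 1}` is `7/96`. -/
theorem stmt_3 :
    volume {t : Fin 3 → ℝ | (∀ i, 0 ≤ t i) ∧
      2 * t 0 ≤ 1 ∧ t 0 + 2 * t 1 + t 2 ≤ 1} = 7 / 96 := by
  have h1 := volume_preserving_piFinSuccAbove (fun _ : Fin 3 => ℝ) 0
  have h2 := (MeasurePreserving.id (volume : Measure ℝ)).prod
    (volume_preserving_finTwoArrow ℝ)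
  have he : MeasurePreserving
      ((MeasurableEquiv.prodCongr (MeasurableEquiv.refl ℝ) MeasurableEquiv.finTwoArrow) ∘
        (MeasurableEquiv.piFinSuccAbove (fun _ : Fin 3 => ℝ) 0)) volume
      (volume.prod (volume.prod volume)) := by
    refine MeasurePreserving.comp ?_ h1
    rw [Measure.volume_eq_prod] at h2 ⊢
    exact h2
  have m1 : Measurable (fun p : ℝ × ℝ × ℝ => 2 * p.1) := measurable_fst.const_mul 2
  have m2 : Measurable (fun p : ℝ × ℝ × ℝ => p.1 + 2 * p.2.1 + p.2.2) :=
    (measurable_fst.add (measurable_snd.fst.const_mul 2)).add measurable_snd.snd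
  have hmeas : MeasurableSet {p : ℝ × ℝ × ℝ |
      (0 ≤ p.1 ∧ 0 ≤ p.2.1 ∧ 0 ≤ p.2.2) ∧ 2 * p.1 ≤ 1 ∧ p.1 + 2 * p.2.1 + p.2.2 ≤ 1} := by
    apply MeasurableSet.inter
    · apply MeasurableSet.inter
      · exact measurableSet_le measurable_const measurable_fst
      apply MeasurableSet.inter
      · exact measurableSet_le measurable_const (measurable_fst.comp measurable_snd)
      · exact measurableSet_le measurable_const (measurable_snd.comp measurable_snd)
    apply MeasurableSet.inter
    · exact measurableSet_le m1 measurable_const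
    · exact measurableSet_le m2 measurable_const
  have hset : {t : Fin 3 → ℝ | (∀ i, 0 ≤ t i) ∧ 2 * t 0 ≤ 1 ∧ t 0 + 2 * t 1 + t 2 ≤ 1} =
      ((MeasurableEquiv.prodCongr (MeasurableEquiv.refl ℝ) MeasurableEquiv.finTwoArrow) ∘
        (MeasurableEquiv.piFinSuccAbove (fun _ : Fin 3 => ℝ) 0)) ⁻¹'
      {p : ℝ × ℝ × ℝ |
        (0 ≤ p.1 ∧ 0 ≤ p.2.1 ∧ 0 ≤ p.2.2) ∧ 2 * p.1 ≤ 1 ∧ p.1 + 2 * p.2.1 + p.2.2 ≤ 1} := by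
    ext t
    simp only [mem_setOf_eq, mem_preimage]
    have happ : ((MeasurableEquiv.prodCongr (MeasurableEquiv.refl ℝ)
        MeasurableEquiv.finTwoArrow) ∘
        (MeasurableEquiv.piFinSuccAbove (fun _ : Fin 3 => ℝ) 0)) t = (t 0, (t 1, t 2)) := rfl
    rw [happ]
    simp only [mem_setOf_eq]
    constructor
    · rintro ⟨h0, ha, hb⟩; exact ⟨⟨h0 0, h0 1, h0 2⟩, ha, hb⟩
    · rintro ⟨⟨h0, h1', h2'⟩, ha, hb⟩
      refine ⟨fun i => ?_, ha, hb⟩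
      fin_cases i <;> assumption
  rw [hset, he.measure_preimage hmeas.nullMeasurableSet, prod_vol]
end

section
/- For every prime p, the p-adic integral ∫ 1/max{|xy|_p, 1, |x|_p²} dx dy over the set {(x,y) ∈ ℚ_p² : |y|_p ≤ 1, or |xy²|_p ≤ 1, or |x+y|_p ≤ 1} equals 1 + 3/p. -/
open MeasureTheory ENNReal
open scoped Function

variable {p : ℕ} [hp : Fact p.Prime]

lemma pball_measurable [MeasurableSpace ℚ_[p]] [BorelSpace ℚ_[p]] (c : ℝ) :
    MeasurableSet {x : ℚ_[p] | ‖x‖ ≤ c} :=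
  (isClosed_le continuous_norm continuous_const).measurableSet

lemma pball_cover (n : ℤ) :
    {x : ℚ_[p] | ‖x‖ ≤ (p:ℝ)^(n+1)} =
      ⋃ k ∈ Finset.range p, (fun x => -((k:ℚ_[p]) * (p:ℚ_[p])^(-(n+1))) + x) ⁻¹' {x : ℚ_[p] | ‖x‖ ≤ (p:ℝ)^n} := by
  have hp1 : (1:ℝ) < p := by exact_mod_cast hp.out.one_lt
  have hp0 : (0:ℝ) < p := by positivity
  have hpq0 : (p:ℚ_[p]) ≠ 0 := by exact_mod_cast hp.out.ne_zero
  ext x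
  simp only [Set.mem_iUnion, Set.mem_preimage, Set.mem_setOf_eq, Finset.mem_range]
  constructor
  · intro hx
    set z : ℚ_[p] := x * (p:ℚ_[p])^(n+1) with hz
    have hznorm : ‖z‖ ≤ 1 := by
      rw [hz, norm_mul, Padic.norm_p_zpow]
      calc ‖x‖ * (p:ℝ)^(-(n+1)) ≤ (p:ℝ)^(n+1) * (p:ℝ)^(-(n+1)) := by
            apply mul_le_mul_of_nonneg_right hx (by positivity)
        _ = 1 := by rw [← zpow_add₀ (ne_of_gt hp0), add_neg_cancel, zpow_zero]
    set zb : ℤ_[p] := ⟨z, hznorm⟩ with hzb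
    refine ⟨zb.appr 1, ?_, ?_⟩
    · simpa using PadicInt.appr_lt zb 1
    · have hmem := PadicInt.appr_spec 1 zb
      have hnorm1 : ‖zb - (zb.appr 1 : ℤ_[p])‖ ≤ (p:ℝ)^(-(1:ℕ):ℤ) := by
        rw [PadicInt.norm_le_pow_iff_mem_span_pow]
        simpa using hmem
      have hcoe : ((zb - (zb.appr 1 : ℤ_[p]) : ℤ_[p]) : ℚ_[p]) = z - (zb.appr 1 : ℚ_[p]) := by
        push_cast [hzb]
        rfl
      have hnq : ‖z - (zb.appr 1 : ℚ_[p])‖ ≤ (p:ℝ)⁻¹ := by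
        rw [← hcoe]
        simpa [PadicInt.norm_def] using hnorm1
      have hzpi : z * (p:ℚ_[p])^(-(n+1)) = x := by
        rw [hz, mul_assoc, ← zpow_add₀ hpq0, add_neg_cancel, zpow_zero, mul_one]
      have hxe : -((zb.appr 1 : ℚ_[p]) * (p:ℚ_[p])^(-(n+1))) + x
          = (z - (zb.appr 1 : ℚ_[p])) * (p:ℚ_[p])^(-(n+1)) := by
        rw [sub_mul, hzpi]; ring
      rw [hxe, norm_mul, Padic.norm_p_zpow, neg_neg]
      calc ‖z - (zb.appr 1 : ℚ_[p])‖ * (p:ℝ)^(n+1)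
          ≤ (p:ℝ)⁻¹ * (p:ℝ)^(n+1) := by
            apply mul_le_mul_of_nonneg_right hnq (by positivity)
        _ = (p:ℝ)^n := by
            rw [← zpow_neg_one, ← zpow_add₀ (ne_of_gt hp0)]
            congr 1
            omega
  · rintro ⟨k, hk, hx⟩
    have h1 : ‖(k:ℚ_[p]) * (p:ℚ_[p])^(-(n+1))‖ ≤ (p:ℝ)^(n+1) := by
      rw [norm_mul, Padic.norm_p_zpow, neg_neg]
      calc ‖(k:ℚ_[p])‖ * (p:ℝ)^(n+1) ≤ 1 * (p:ℝ)^(n+1) := by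
            apply mul_le_mul_of_nonneg_right _ (by positivity)
            exact_mod_cast Padic.norm_int_le_one (k:ℤ)
        _ = (p:ℝ)^(n+1) := one_mul _
    have hd : x = ((k:ℚ_[p]) * (p:ℚ_[p])^(-(n+1))) + (-((k:ℚ_[p]) * (p:ℚ_[p])^(-(n+1))) + x) := by ring
    rw [hd]
    refine le_trans (Padic.nonarchimedean _ _) ?_
    apply max_le h1 (le_trans hx ?_)
    apply zpow_le_zpow_right₀ (le_of_lt hp1)
    omega

lemma pball_disjoint (n : ℤ) :
    (↑(Finset.range p) : Set ℕ).PairwiseDisjoint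
      (fun k => (fun x => -((k:ℚ_[p]) * (p:ℚ_[p])^(-(n+1))) + x) ⁻¹' {x : ℚ_[p] | ‖x‖ ≤ (p:ℝ)^n}) := by
  have hp1 : (1:ℝ) < p := by exact_mod_cast hp.out.one_lt
  intro k hk l hl hkl
  simp only [Finset.coe_range, Set.mem_Iio] at hk hl
  apply Set.disjoint_left.mpr
  rintro x hx hx'
  simp only [Set.mem_preimage, Set.mem_setOf_eq] at hx hx'
  have hdiff : ((k:ℚ_[p]) - l) * (p:ℚ_[p])^(-(n+1))
      = (-((l:ℚ_[p]) * (p:ℚ_[p])^(-(n+1))) + x) - (-((k:ℚ_[p]) * (p:ℚ_[p])^(-(n+1))) + x) := by ring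
  have hle : ‖((k:ℚ_[p]) - l) * (p:ℚ_[p])^(-(n+1))‖ ≤ (p:ℝ)^n := by
    rw [hdiff, sub_eq_add_neg]
    refine le_trans (Padic.nonarchimedean _ _) (max_le hx' ?_)
    rw [norm_neg]; exact hx
  have hnorm_kl : ‖((k:ℚ_[p]) - l)‖ = 1 := by
    have hint : ((k:ℚ_[p]) - l) = (((k:ℤ) - l : ℤ) : ℚ_[p]) := by push_cast; ring
    rw [hint]
    have hle1 : ‖(((k:ℤ) - l : ℤ) : ℚ_[p])‖ ≤ 1 := Padic.norm_int_le_one _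
    rcases lt_or_eq_of_le hle1 with h | h
    · exfalso
      rw [Padic.norm_intCast_lt_one_iff] at h
      have h0 : ((k:ℤ) - l) = 0 :=
        Int.eq_zero_of_dvd_of_natAbs_lt_natAbs h (by simp; omega)
      omega
    · exact h
  rw [norm_mul, hnorm_kl, one_mul, Padic.norm_p_zpow, neg_neg] at hle
  have hlt : (p:ℝ)^n < (p:ℝ)^(n+1) := by
    apply zpow_lt_zpow_right₀ hp1; omega
  linarith

variable [MeasurableSpace ℚ_[p]] [BorelSpace ℚ_[p]]

lemma measure_pball_succ (μ : Measure ℚ_[p]) [μ.IsAddHaarMeasure] (n : ℤ) :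
    μ {x : ℚ_[p] | ‖x‖ ≤ (p:ℝ)^(n+1)} = p * μ {x : ℚ_[p] | ‖x‖ ≤ (p:ℝ)^n} := by
  rw [pball_cover n, measure_biUnion_finset (pball_disjoint n)
    (fun k _ => (pball_measurable _).preimage (measurable_const_add _))]
  simp only [measure_preimage_add]
  rw [Finset.sum_const, Finset.card_range, nsmul_eq_mul]

lemma measure_pball (μ : Measure ℚ_[p]) [μ.IsAddHaarMeasure]
    (hμ : μ {x : ℚ_[p] | ‖x‖ ≤ 1} = 1) (n : ℤ) :
    μ {x : ℚ_[p] | ‖x‖ ≤ (p:ℝ)^n} = (p:ℝ≥0∞)^n := by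
  have hp0 : (p:ℝ≥0∞) ≠ 0 := by exact_mod_cast hp.out.ne_zero
  have hpt : (p:ℝ≥0∞) ≠ ⊤ := ENNReal.natCast_ne_top p
  induction n using Int.induction_on with
  | zero => simpa using hμ
  | succ k ih =>
    rw [measure_pball_succ μ k, ih, ENNReal.zpow_add hp0 hpt, zpow_one]
    ring
  | pred k ih =>
    have h := measure_pball_succ μ (-(k:ℤ)-1)
    rw [show ((-(k:ℤ)-1)+1 : ℤ) = -k by ring, ih] at h
    have hx : μ {x : ℚ_[p] | ‖x‖ ≤ (p:ℝ)^(-(k:ℤ)-1)} = (p:ℝ≥0∞)^(-(k:ℤ)) / p := by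
      rw [h, mul_comm, mul_div_assoc, ENNReal.div_self hp0 hpt, mul_one]
    rw [hx, ENNReal.zpow_sub hp0 hpt, zpow_one, div_eq_mul_inv]

lemma psphere_eq (n : ℤ) :
    {x : ℚ_[p] | ‖x‖ = (p:ℝ)^n}
      = {x : ℚ_[p] | ‖x‖ ≤ (p:ℝ)^n} \ {x : ℚ_[p] | ‖x‖ ≤ (p:ℝ)^(n-1)} := by
  have hp1 : (1:ℝ) < p := by exact_mod_cast hp.out.one_lt
  ext x
  simp only [Set.mem_setOf_eq, Set.mem_diff, not_le]
  constructor
  · intro h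
    exact ⟨le_of_eq h, by rw [h]; exact zpow_lt_zpow_right₀ hp1 (by omega)⟩
  · rintro ⟨h1, h2⟩
    have hx0 : x ≠ 0 := by
      rintro rfl
      simp only [norm_zero] at h2
      exact absurd h2 (not_lt.mpr (by positivity))
    rw [Padic.norm_eq_zpow_neg_valuation hx0] at h1 h2 ⊢
    congr 1
    have hv1 : -x.valuation ≤ n := (zpow_le_zpow_iff_right₀ hp1).mp h1
    have hv2 : n - 1 < -x.valuation := (zpow_lt_zpow_iff_right₀ hp1).mp h2
    omega

lemma measure_psphere (μ : Measure ℚ_[p]) [μ.IsAddHaarMeasure]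
    (hμ : μ {x : ℚ_[p] | ‖x‖ ≤ 1} = 1) (n : ℤ) :
    μ {x : ℚ_[p] | ‖x‖ = (p:ℝ)^n} = (p:ℝ≥0∞)^n - (p:ℝ≥0∞)^(n-1) := by
  have hp1 : (1:ℝ) < p := by exact_mod_cast hp.out.one_lt
  have hsub : {x : ℚ_[p] | ‖x‖ ≤ (p:ℝ)^(n-1)} ⊆ {x : ℚ_[p] | ‖x‖ ≤ (p:ℝ)^n} :=
    fun x hx => le_trans hx (zpow_le_zpow_right₀ (le_of_lt hp1) (by omega))
  rw [psphere_eq, measure_diff hsub (pball_measurable _).nullMeasurableSet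
    (by rw [measure_pball μ hμ]
        exact (ENNReal.zpow_lt_top (by exact_mod_cast hp.out.ne_zero) (ENNReal.natCast_ne_top p) _).ne),
    measure_pball μ hμ, measure_pball μ hμ]

lemma norm_cases (x : ℚ_[p]) : ‖x‖ ≤ 1 ∨ ∃ k : ℕ, ‖x‖ = (p:ℝ)^((k:ℤ)+1) := by
  have hp1 : (1:ℝ) < p := by exact_mod_cast hp.out.one_lt
  by_cases h : ‖x‖ ≤ 1
  · exact Or.inl h
  · right
    push_neg at h
    have hx0 : x ≠ 0 := by rintro rfl; simp at h; linarith
    rw [Padic.norm_eq_zpow_neg_valuation hx0] at h ⊢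
    have hv : 0 < -x.valuation := by
      by_contra hc
      push_neg at hc
      exact absurd (zpow_le_one_of_nonpos₀ (le_of_lt hp1) hc) (not_le.mpr h)
    refine ⟨(-x.valuation - 1).toNat, ?_⟩
    congr 1
    omega

lemma norm_eq_of_add_le {x y : ℚ_[p]} (hy : 1 < ‖y‖) (hxy : ‖x + y‖ ≤ 1) : ‖x‖ = ‖y‖ := by
  have hne : ‖x + y‖ ≠ ‖-y‖ := by rw [norm_neg]; exact ne_of_lt (lt_of_le_of_lt hxy hy)
  have : x = (x + y) + (-y) := by ring
  rw [this, Padic.add_eq_max_of_ne hne, norm_neg]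
  exact max_eq_right (le_of_lt (lt_of_le_of_lt hxy hy))

lemma tsum_geo_key :
    ∑' k : ℕ, (p:ℝ≥0∞)^(-2*((k:ℤ)+1)) * ((p:ℝ≥0∞)^((k:ℤ)+1) - (p:ℝ≥0∞)^((k:ℤ)+1-1))
      = (p:ℝ≥0∞)⁻¹ := by
  have hp0 : (p:ℝ≥0∞) ≠ 0 := by exact_mod_cast hp.out.ne_zero
  have hpt : (p:ℝ≥0∞) ≠ ⊤ := ENNReal.natCast_ne_top p
  have hp1 : (1:ℝ≥0∞) < p := by exact_mod_cast hp.out.one_lt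
  have hP10 : (p:ℝ≥0∞) - 1 ≠ 0 := by
    rw [← pos_iff_ne_zero, tsub_pos_iff_lt]; exact hp1
  have hP1t : (p:ℝ≥0∞) - 1 ≠ ⊤ := (lt_of_le_of_lt (tsub_le_self) (lt_top_iff_ne_top.mpr hpt)).ne
  have hterm : ∀ k : ℕ, (p:ℝ≥0∞)^(-2*((k:ℤ)+1)) * ((p:ℝ≥0∞)^((k:ℤ)+1) - (p:ℝ≥0∞)^((k:ℤ)+1-1))
      = ((p:ℝ≥0∞)^(-2:ℤ) * ((p:ℝ≥0∞) - 1)) * ((p:ℝ≥0∞)⁻¹)^k := by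
    intro k
    have e1 : ((k:ℤ)+1-1) = (k:ℤ) := by ring
    have e2 : (p:ℝ≥0∞)^((k:ℤ)+1) - (p:ℝ≥0∞)^(k:ℤ) = (p:ℝ≥0∞)^(k:ℤ) * ((p:ℝ≥0∞) - 1) := by
      rw [ENNReal.mul_sub (fun _ _ => (ENNReal.zpow_lt_top hp0 hpt _).ne), mul_one,
        ENNReal.zpow_add hp0 hpt, zpow_one]
    rw [e1, e2]
    have e3 : (p:ℝ≥0∞)^(-2*((k:ℤ)+1)) * (p:ℝ≥0∞)^(k:ℤ) = (p:ℝ≥0∞)^(-2:ℤ) * (p:ℝ≥0∞)^(-(k:ℤ)) := by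
      rw [← ENNReal.zpow_add hp0 hpt, ← ENNReal.zpow_add hp0 hpt]
      congr 1
      ring
    have e4 : (p:ℝ≥0∞)^(-(k:ℤ)) = ((p:ℝ≥0∞)⁻¹)^k := by
      rw [ENNReal.zpow_neg, zpow_natCast, ENNReal.inv_pow]
    calc (p:ℝ≥0∞)^(-2*((k:ℤ)+1)) * ((p:ℝ≥0∞)^(k:ℤ) * ((p:ℝ≥0∞) - 1))
        = ((p:ℝ≥0∞)^(-2*((k:ℤ)+1)) * (p:ℝ≥0∞)^(k:ℤ)) * ((p:ℝ≥0∞) - 1) := by ring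
      _ = ((p:ℝ≥0∞)^(-2:ℤ) * (p:ℝ≥0∞)^(-(k:ℤ))) * ((p:ℝ≥0∞) - 1) := by rw [e3]
      _ = ((p:ℝ≥0∞)^(-2:ℤ) * ((p:ℝ≥0∞) - 1)) * ((p:ℝ≥0∞)⁻¹)^k := by rw [e4]; ring
  rw [tsum_congr hterm, ENNReal.tsum_mul_left, ENNReal.tsum_geometric]
  have hgeo : (1 : ℝ≥0∞) - (p:ℝ≥0∞)⁻¹ = ((p:ℝ≥0∞) - 1) * (p:ℝ≥0∞)⁻¹ := by
    rw [ENNReal.sub_mul (fun _ _ => ENNReal.inv_ne_top.mpr hp0), one_mul,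
      ENNReal.mul_inv_cancel hp0 hpt]
  rw [hgeo, ENNReal.mul_inv (Or.inl hP10) (Or.inr (by simpa using hp0)), inv_inv]
  calc (p:ℝ≥0∞)^(-2:ℤ) * ((p:ℝ≥0∞) - 1) * (((p:ℝ≥0∞) - 1)⁻¹ * (p:ℝ≥0∞))
      = ((p:ℝ≥0∞)^(-2:ℤ) * (p:ℝ≥0∞)) * (((p:ℝ≥0∞) - 1) * ((p:ℝ≥0∞) - 1)⁻¹) := by ring
    _ = (p:ℝ≥0∞)⁻¹ := by
        rw [ENNReal.mul_inv_cancel hP10 hP1t, mul_one]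
        nth_rewrite 2 [← zpow_one (p:ℝ≥0∞)]
        rw [← ENNReal.zpow_add hp0 hpt]
        rw [show ((-2:ℤ)+1) = -1 by ring, ENNReal.zpow_neg, zpow_one]

lemma ofReal_zpow_p (m : ℤ) : ENNReal.ofReal ((p:ℝ)^m) = (p:ℝ≥0∞)^m := by
  have h1 : ((p:ℝ)) = ((p : NNReal) : ℝ) := by simp
  rw [h1, ← NNReal.coe_zpow, ENNReal.ofReal_coe_nnreal,
    ENNReal.coe_zpow (by exact_mod_cast hp.out.ne_zero)]
  simp

lemma f_val {x y : ℚ_[p]} (k : ℕ) (hx : ‖x‖ = (p:ℝ)^((k:ℤ)+1)) (hy : ‖y‖ ≤ (p:ℝ)^((k:ℤ)+1)) :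
    ENNReal.ofReal (1 / max (max ‖x * y‖ 1) (‖x‖ ^ 2)) = (p:ℝ≥0∞)^(-2*((k:ℤ)+1)) := by
  have hp1 : (1:ℝ) < p := by exact_mod_cast hp.out.one_lt
  have hp0 : (0:ℝ) < p := by positivity
  have hR1 : 1 < (p:ℝ)^((k:ℤ)+1) := one_lt_zpow₀ hp1 (by omega)
  have hx2 : ‖x‖^2 = (p:ℝ)^(2*((k:ℤ)+1)) := by
    rw [hx, sq, ← zpow_add₀ (ne_of_gt hp0)]
    congr 1
    ring
  have hmax : max (max ‖x * y‖ 1) (‖x‖ ^ 2) = (p:ℝ)^(2*((k:ℤ)+1)) := by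
    rw [← hx2]
    apply max_eq_right
    apply max_le
    · rw [norm_mul, sq, hx]
      exact mul_le_mul_of_nonneg_left hy (by positivity)
    · rw [hx2]
      exact le_of_lt (one_lt_zpow₀ hp1 (by omega))
  rw [hmax, one_div, ← zpow_neg, ofReal_zpow_p]
  congr 1 <;> ring

lemma f_one {x y : ℚ_[p]} (hx : ‖x‖ ≤ 1) (hxy : ‖x * y‖ ≤ 1) :
    ENNReal.ofReal (1 / max (max ‖x * y‖ 1) (‖x‖ ^ 2)) = 1 := by
  have hmax : max (max ‖x * y‖ 1) (‖x‖ ^ 2) = 1 := by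
    rw [max_eq_right hxy]
    exact max_eq_left (pow_le_one₀ (norm_nonneg x) hx)
  rw [hmax]
  simp

lemma sph_exp_inj {a b : ℕ} (h : (p:ℝ)^((a:ℤ)+1) = (p:ℝ)^((b:ℤ)+1)) : a = b := by
  have hp1 : (1:ℝ) < p := by exact_mod_cast hp.out.one_lt
  have h1 := (zpow_le_zpow_iff_right₀ hp1).mp (le_of_eq h)
  have h2 := (zpow_le_zpow_iff_right₀ hp1).mp (ge_of_eq h)
  omega

lemma normxy2_iff {x y : ℚ_[p]} (k : ℕ) (hy : ‖y‖ = (p:ℝ)^((k:ℤ)+1)) :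
    ‖x * y^2‖ ≤ 1 ↔ ‖x‖ ≤ (p:ℝ)^(-2*((k:ℤ)+1)) := by
  have hp1 : (1:ℝ) < p := by exact_mod_cast hp.out.one_lt
  have hp0 : (0:ℝ) < p := by positivity
  have hsq : ‖y‖^2 = (p:ℝ)^(2*((k:ℤ)+1)) := by
    rw [hy, sq, ← zpow_add₀ (ne_of_gt hp0)]
    congr 1
    ring
  rw [norm_mul, norm_pow, hsq]
  constructor
  · intro h
    have h2 := (le_div_iff₀ (by positivity : (0:ℝ) < (p:ℝ)^(2*((k:ℤ)+1)))).mpr h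
    rwa [one_div, ← zpow_neg, (by ring : -(2*((k:ℤ)+1)) = -2*((k:ℤ)+1))] at h2
  · intro h
    calc ‖x‖ * (p:ℝ)^(2*((k:ℤ)+1))
        ≤ (p:ℝ)^(-2*((k:ℤ)+1)) * (p:ℝ)^(2*((k:ℤ)+1)) :=
          mul_le_mul_of_nonneg_right h (by positivity)
      _ = 1 := by
          rw [← zpow_add₀ (ne_of_gt hp0)]
          norm_num
/-- For every prime `p`, the `p`-adic integral of `1/max{|xy|,1,|x|²}` over
`{|y| ≤ 1 or |xy²| ≤ 1 or |x+y| ≤ 1}` equals `1 + 3/p`. -/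
theorem stmt_6 (p : ℕ) [Fact p.Prime] [MeasurableSpace ℚ_[p]] [BorelSpace ℚ_[p]]
    (μ : Measure ℚ_[p]) [μ.IsAddHaarMeasure] (hμ : μ {x : ℚ_[p] | ‖x‖ ≤ 1} = 1) :
    ∫ q in {q : ℚ_[p] × ℚ_[p] | ‖q.2‖ ≤ 1 ∨ ‖q.1 * q.2 ^ 2‖ ≤ 1 ∨ ‖q.1 + q.2‖ ≤ 1},
        1 / max (max ‖q.1 * q.2‖ 1) (‖q.1‖ ^ 2) ∂(μ.prod μ)
      = 1 + 3 / p := by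
  have hp1R : (1:ℝ) < p := by exact_mod_cast (Fact.out : p.Prime).one_lt
  have hp0R : (0:ℝ) < p := by positivity
  have hp0E : (p:ℝ≥0∞) ≠ 0 := by
    exact_mod_cast (Fact.out : p.Prime).ne_zero
  have hptE : (p:ℝ≥0∞) ≠ ⊤ := ENNReal.natCast_ne_top p
  have msph : ∀ k : ℕ, MeasurableSet {x : ℚ_[p] | ‖x‖ = (p:ℝ)^((k:ℤ)+1)} := fun k =>
    (isClosed_eq continuous_norm continuous_const).measurableSet
  have mball : ∀ c : ℝ, MeasurableSet {x : ℚ_[p] | ‖x‖ ≤ c} := fun c => pball_measurable c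
  have hR1 : ∀ k : ℕ, (1:ℝ) < (p:ℝ)^((k:ℤ)+1) := fun k => one_lt_zpow₀ hp1R (by omega)
  -- the three lintegrals
  have hLA : ∫⁻ q in {q : ℚ_[p] × ℚ_[p] | ‖q.2‖ ≤ 1},
      ENNReal.ofReal (1 / max (max ‖q.1 * q.2‖ 1) (‖q.1‖ ^ 2)) ∂(μ.prod μ)
      = 1 + (p:ℝ≥0∞)⁻¹ := by
    have hA : {q : ℚ_[p] × ℚ_[p] | ‖q.2‖ ≤ 1}
        = ({x : ℚ_[p] | ‖x‖ ≤ 1} ×ˢ {x : ℚ_[p] | ‖x‖ ≤ 1})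
          ∪ ⋃ k : ℕ, ({x : ℚ_[p] | ‖x‖ = (p:ℝ)^((k:ℤ)+1)} ×ˢ {x : ℚ_[p] | ‖x‖ ≤ 1}) := by
      ext q
      simp only [Set.mem_setOf_eq, Set.mem_union, Set.mem_iUnion, Set.mem_prod]
      constructor
      · intro h
        rcases norm_cases q.1 with h1 | ⟨k, hk⟩
        · exact Or.inl ⟨h1, h⟩
        · exact Or.inr ⟨k, hk, h⟩
      · rintro (⟨_, h⟩ | ⟨k, _, h⟩) <;> exact h
    have hdis : Disjoint ({x : ℚ_[p] | ‖x‖ ≤ 1} ×ˢ {x : ℚ_[p] | ‖x‖ ≤ 1})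
        (⋃ k : ℕ, ({x : ℚ_[p] | ‖x‖ = (p:ℝ)^((k:ℤ)+1)} ×ˢ {x : ℚ_[p] | ‖x‖ ≤ 1})) := by
      rw [Set.disjoint_left]
      rintro q ⟨hq1, _⟩ hq2
      simp only [Set.mem_iUnion, Set.mem_prod, Set.mem_setOf_eq] at hq1 hq2
      obtain ⟨k, hk, _⟩ := hq2
      rw [hk] at hq1
      exact absurd hq1 (not_le.mpr (hR1 k))
    have hpairA : Pairwise (Disjoint on fun k : ℕ =>
        ({x : ℚ_[p] | ‖x‖ = (p:ℝ)^((k:ℤ)+1)} ×ˢ {x : ℚ_[p] | ‖x‖ ≤ 1})) := by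
      intro k l hkl
      simp only [Function.onFun]
      rw [Set.disjoint_left]
      rintro q ⟨hq1, _⟩ ⟨hq2, _⟩
      simp only [Set.mem_setOf_eq] at hq1 hq2
      exact hkl (sph_exp_inj (hq1.symm.trans hq2))
    rw [hA, lintegral_union (MeasurableSet.iUnion fun k => (msph k).prod (mball 1)) hdis,
      lintegral_iUnion (fun k => (msph k).prod (mball 1)) hpairA]
    have h1 : ∫⁻ q in ({x : ℚ_[p] | ‖x‖ ≤ 1} ×ˢ {x : ℚ_[p] | ‖x‖ ≤ 1}),
        ENNReal.ofReal (1 / max (max ‖q.1 * q.2‖ 1) (‖q.1‖ ^ 2)) ∂(μ.prod μ) = 1 := by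
      rw [setLIntegral_congr_fun ((mball 1).prod (mball 1))
        ((fun q hq => f_one hq.1
          (by rw [norm_mul]
              exact mul_le_one₀ hq.1 (norm_nonneg _) hq.2))),
        setLIntegral_const, Measure.prod_prod, hμ]
      simp
    have h2 : ∀ k : ℕ, ∫⁻ q in ({x : ℚ_[p] | ‖x‖ = (p:ℝ)^((k:ℤ)+1)} ×ˢ {x : ℚ_[p] | ‖x‖ ≤ 1}),
        ENNReal.ofReal (1 / max (max ‖q.1 * q.2‖ 1) (‖q.1‖ ^ 2)) ∂(μ.prod μ)
        = (p:ℝ≥0∞)^(-2*((k:ℤ)+1)) * ((p:ℝ≥0∞)^((k:ℤ)+1) - (p:ℝ≥0∞)^((k:ℤ)+1-1)) := by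
      intro k
      rw [setLIntegral_congr_fun ((msph k).prod (mball 1))
        ((fun q hq =>
          f_val k hq.1 (le_trans hq.2 (le_of_lt (hR1 k))))),
        setLIntegral_const, Measure.prod_prod, measure_psphere μ hμ, hμ, mul_one]
    rw [h1, tsum_congr h2, tsum_geo_key]
  have hLB : ∫⁻ q in {q : ℚ_[p] × ℚ_[p] | 1 < ‖q.2‖ ∧ ‖q.1 * q.2 ^ 2‖ ≤ 1},
      ENNReal.ofReal (1 / max (max ‖q.1 * q.2‖ 1) (‖q.1‖ ^ 2)) ∂(μ.prod μ)
      = (p:ℝ≥0∞)⁻¹ := by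
    have hB : {q : ℚ_[p] × ℚ_[p] | 1 < ‖q.2‖ ∧ ‖q.1 * q.2 ^ 2‖ ≤ 1}
        = ⋃ k : ℕ, ({x : ℚ_[p] | ‖x‖ ≤ (p:ℝ)^(-2*((k:ℤ)+1))} ×ˢ
            {x : ℚ_[p] | ‖x‖ = (p:ℝ)^((k:ℤ)+1)}) := by
      ext q
      simp only [Set.mem_setOf_eq, Set.mem_iUnion, Set.mem_prod]
      constructor
      · rintro ⟨hy, hxy⟩
        rcases norm_cases q.2 with h1 | ⟨k, hk⟩
        · linarith
        · exact ⟨k, (normxy2_iff k hk).mp hxy, hk⟩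
      · rintro ⟨k, hx, hy⟩
        exact ⟨hy ▸ hR1 k, (normxy2_iff k hy).mpr hx⟩
    have hpairB : Pairwise (Disjoint on fun k : ℕ =>
        ({x : ℚ_[p] | ‖x‖ ≤ (p:ℝ)^(-2*((k:ℤ)+1))} ×ˢ
          {x : ℚ_[p] | ‖x‖ = (p:ℝ)^((k:ℤ)+1)})) := by
      intro k l hkl
      simp only [Function.onFun]
      rw [Set.disjoint_left]
      rintro q ⟨_, hq1⟩ ⟨_, hq2⟩
      simp only [Set.mem_setOf_eq] at hq1 hq2
      exact hkl (sph_exp_inj (hq1.symm.trans hq2))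
    rw [hB, lintegral_iUnion (fun k => (mball _).prod (msph k)) hpairB]
    have h2 : ∀ k : ℕ, ∫⁻ q in ({x : ℚ_[p] | ‖x‖ ≤ (p:ℝ)^(-2*((k:ℤ)+1))} ×ˢ
        {x : ℚ_[p] | ‖x‖ = (p:ℝ)^((k:ℤ)+1)}),
        ENNReal.ofReal (1 / max (max ‖q.1 * q.2‖ 1) (‖q.1‖ ^ 2)) ∂(μ.prod μ)
        = (p:ℝ≥0∞)^(-2*((k:ℤ)+1)) * ((p:ℝ≥0∞)^((k:ℤ)+1) - (p:ℝ≥0∞)^((k:ℤ)+1-1)) := by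
      intro k
      have hxle1 : ∀ x : ℚ_[p], ‖x‖ ≤ (p:ℝ)^(-2*((k:ℤ)+1)) → ‖x‖ ≤ 1 := fun x hx =>
        le_trans hx (zpow_le_one_of_nonpos₀ (le_of_lt hp1R) (by omega))
      rw [setLIntegral_congr_fun ((mball _).prod (msph k))
        ((fun q hq => f_one (hxle1 _ hq.1)
          (by
            rw [norm_mul]
            have hy := hq.2
            simp only [Set.mem_setOf_eq] at hy
            calc ‖q.1‖ * ‖q.2‖ ≤ (p:ℝ)^(-2*((k:ℤ)+1)) * (p:ℝ)^((k:ℤ)+1) := by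
                  rw [hy]
                  exact mul_le_mul_of_nonneg_right hq.1 (by positivity)
              _ = (p:ℝ)^(-(k:ℤ)-1) := by
                  rw [← zpow_add₀ (ne_of_gt hp0R)]
                  congr 1
                  ring
              _ ≤ 1 := zpow_le_one_of_nonpos₀ (le_of_lt hp1R) (by omega)))),
        setLIntegral_const, Measure.prod_prod, measure_psphere μ hμ,
        measure_pball μ hμ, one_mul]
    rw [tsum_congr h2, tsum_geo_key]
  have hLC : ∫⁻ q in {q : ℚ_[p] × ℚ_[p] | 1 < ‖q.2‖ ∧ ‖q.1 + q.2‖ ≤ 1},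
      ENNReal.ofReal (1 / max (max ‖q.1 * q.2‖ 1) (‖q.1‖ ^ 2)) ∂(μ.prod μ)
      = (p:ℝ≥0∞)⁻¹ := by
    have hC : {q : ℚ_[p] × ℚ_[p] | 1 < ‖q.2‖ ∧ ‖q.1 + q.2‖ ≤ 1}
        = ⋃ k : ℕ, ({q : ℚ_[p] × ℚ_[p] | ‖q.2‖ = (p:ℝ)^((k:ℤ)+1)} ∩
            {q : ℚ_[p] × ℚ_[p] | ‖q.1 + q.2‖ ≤ 1}) := by
      ext q
      simp only [Set.mem_setOf_eq, Set.mem_iUnion, Set.mem_inter_iff]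
      constructor
      · rintro ⟨hy, hxy⟩
        rcases norm_cases q.2 with h1 | ⟨k, hk⟩
        · linarith
        · exact ⟨k, hk, hxy⟩
      · rintro ⟨k, hy, hxy⟩
        exact ⟨hy ▸ hR1 k, hxy⟩
    have mCk : ∀ k : ℕ, MeasurableSet ({q : ℚ_[p] × ℚ_[p] | ‖q.2‖ = (p:ℝ)^((k:ℤ)+1)} ∩
        {q : ℚ_[p] × ℚ_[p] | ‖q.1 + q.2‖ ≤ 1}) := fun k =>
      ((isClosed_eq (continuous_snd.norm) continuous_const).measurableSet).inter
        ((isClosed_le ((continuous_fst.add continuous_snd).norm) continuous_const).measurableSet)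
    have hpairC : Pairwise (Disjoint on fun k : ℕ =>
        ({q : ℚ_[p] × ℚ_[p] | ‖q.2‖ = (p:ℝ)^((k:ℤ)+1)} ∩
          {q : ℚ_[p] × ℚ_[p] | ‖q.1 + q.2‖ ≤ 1})) := by
      intro k l hkl
      simp only [Function.onFun]
      rw [Set.disjoint_left]
      rintro q ⟨hq1, _⟩ ⟨hq2, _⟩
      simp only [Set.mem_setOf_eq] at hq1 hq2
      exact hkl (sph_exp_inj (hq1.symm.trans hq2))
    rw [hC, lintegral_iUnion mCk hpairC]
    have hmeasCk : ∀ k : ℕ, (μ.prod μ) ({q : ℚ_[p] × ℚ_[p] | ‖q.2‖ = (p:ℝ)^((k:ℤ)+1)} ∩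
        {q : ℚ_[p] × ℚ_[p] | ‖q.1 + q.2‖ ≤ 1})
        = (p:ℝ≥0∞)^((k:ℤ)+1) - (p:ℝ≥0∞)^((k:ℤ)+1-1) := by
      intro k
      rw [Measure.prod_apply (mCk k)]
      have hsec : ∀ x : ℚ_[p], μ (Prod.mk x ⁻¹' ({q : ℚ_[p] × ℚ_[p] | ‖q.2‖ = (p:ℝ)^((k:ℤ)+1)} ∩
          {q : ℚ_[p] × ℚ_[p] | ‖q.1 + q.2‖ ≤ 1}))
          = Set.indicator {x : ℚ_[p] | ‖x‖ = (p:ℝ)^((k:ℤ)+1)} (fun _ => 1) x := by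
        intro x
        by_cases hx : ‖x‖ = (p:ℝ)^((k:ℤ)+1)
        · have hpre : Prod.mk x ⁻¹' ({q : ℚ_[p] × ℚ_[p] | ‖q.2‖ = (p:ℝ)^((k:ℤ)+1)} ∩
              {q : ℚ_[p] × ℚ_[p] | ‖q.1 + q.2‖ ≤ 1})
              = (fun y => x + y) ⁻¹' {z : ℚ_[p] | ‖z‖ ≤ 1} := by
            ext y
            simp only [Set.mem_preimage, Set.mem_inter_iff, Set.mem_setOf_eq]
            constructor
            · rintro ⟨_, h⟩; exact h
            · intro h
              refine ⟨?_, h⟩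
              have h1 : 1 < ‖x‖ := by rw [hx]; exact hR1 k
              rw [norm_eq_of_add_le h1 (by rwa [add_comm]), hx]
          rw [hpre, measure_preimage_add μ x _, hμ]
          exact (Set.indicator_of_mem
            (show x ∈ {x : ℚ_[p] | ‖x‖ = (p:ℝ)^((k:ℤ)+1)} from hx) fun _ => (1:ℝ≥0∞)).symm
        · have hpre : Prod.mk x ⁻¹' ({q : ℚ_[p] × ℚ_[p] | ‖q.2‖ = (p:ℝ)^((k:ℤ)+1)} ∩
              {q : ℚ_[p] × ℚ_[p] | ‖q.1 + q.2‖ ≤ 1}) = ∅ := by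
            ext y
            simp only [Set.mem_preimage, Set.mem_inter_iff, Set.mem_setOf_eq,
              Set.mem_empty_iff_false, iff_false, not_and]
            intro h1 h2
            apply hx
            have hy1 : 1 < ‖y‖ := by rw [h1]; exact hR1 k
            rw [norm_eq_of_add_le hy1 h2, h1]
          rw [hpre, measure_empty]
          exact (Set.indicator_of_notMem
            (show x ∉ {x : ℚ_[p] | ‖x‖ = (p:ℝ)^((k:ℤ)+1)} from hx) fun _ => (1:ℝ≥0∞)).symm
      calc ∫⁻ x, μ (Prod.mk x ⁻¹' ({q : ℚ_[p] × ℚ_[p] | ‖q.2‖ = (p:ℝ)^((k:ℤ)+1)} ∩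
              {q : ℚ_[p] × ℚ_[p] | ‖q.1 + q.2‖ ≤ 1})) ∂μ
          = ∫⁻ x, Set.indicator {x : ℚ_[p] | ‖x‖ = (p:ℝ)^((k:ℤ)+1)} (fun _ => 1) x ∂μ :=
            lintegral_congr hsec
        _ = (p:ℝ≥0∞)^((k:ℤ)+1) - (p:ℝ≥0∞)^((k:ℤ)+1-1) := by
            rw [lintegral_indicator_const (msph k), one_mul, measure_psphere μ hμ]
    have h2 : ∀ k : ℕ, ∫⁻ q in ({q : ℚ_[p] × ℚ_[p] | ‖q.2‖ = (p:ℝ)^((k:ℤ)+1)} ∩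
        {q : ℚ_[p] × ℚ_[p] | ‖q.1 + q.2‖ ≤ 1}),
        ENNReal.ofReal (1 / max (max ‖q.1 * q.2‖ 1) (‖q.1‖ ^ 2)) ∂(μ.prod μ)
        = (p:ℝ≥0∞)^(-2*((k:ℤ)+1)) * ((p:ℝ≥0∞)^((k:ℤ)+1) - (p:ℝ≥0∞)^((k:ℤ)+1-1)) := by
      intro k
      rw [setLIntegral_congr_fun (mCk k)
        ((fun q hq => by
          have hy : ‖q.2‖ = (p:ℝ)^((k:ℤ)+1) := hq.1
          have hadd : ‖q.1 + q.2‖ ≤ 1 := hq.2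
          have hx : ‖q.1‖ = ‖q.2‖ := norm_eq_of_add_le (hy ▸ hR1 k) hadd
          exact f_val k (hx.trans hy) (le_of_eq hy))),
        setLIntegral_const, hmeasCk k]
    rw [tsum_congr h2, tsum_geo_key]
  -- set decomposition
  have hSU : {q : ℚ_[p] × ℚ_[p] | ‖q.2‖ ≤ 1 ∨ ‖q.1 * q.2 ^ 2‖ ≤ 1 ∨ ‖q.1 + q.2‖ ≤ 1}
      = {q : ℚ_[p] × ℚ_[p] | ‖q.2‖ ≤ 1} ∪
        ({q : ℚ_[p] × ℚ_[p] | 1 < ‖q.2‖ ∧ ‖q.1 * q.2 ^ 2‖ ≤ 1} ∪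
          {q : ℚ_[p] × ℚ_[p] | 1 < ‖q.2‖ ∧ ‖q.1 + q.2‖ ≤ 1}) := by
    ext q
    simp only [Set.mem_setOf_eq, Set.mem_union]
    constructor
    · rintro (h | h | h)
      · exact Or.inl h
      · rcases le_or_gt ‖q.2‖ 1 with hy | hy
        · exact Or.inl hy
        · exact Or.inr (Or.inl ⟨hy, h⟩)
      · rcases le_or_gt ‖q.2‖ 1 with hy | hy
        · exact Or.inl hy
        · exact Or.inr (Or.inr ⟨hy, h⟩)
    · rintro (h | ⟨_, h⟩ | ⟨_, h⟩)
      · exact Or.inl h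
      · exact Or.inr (Or.inl h)
      · exact Or.inr (Or.inr h)
  have mB : MeasurableSet {q : ℚ_[p] × ℚ_[p] | 1 < ‖q.2‖ ∧ ‖q.1 * q.2 ^ 2‖ ≤ 1} :=
    ((isOpen_lt continuous_const continuous_snd.norm).measurableSet).inter
      ((isClosed_le ((continuous_fst.mul (continuous_snd.pow 2)).norm) continuous_const).measurableSet)
  have mC : MeasurableSet {q : ℚ_[p] × ℚ_[p] | 1 < ‖q.2‖ ∧ ‖q.1 + q.2‖ ≤ 1} :=
    ((isOpen_lt continuous_const continuous_snd.norm).measurableSet).inter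
      ((isClosed_le ((continuous_fst.add continuous_snd).norm) continuous_const).measurableSet)
  have hdisjA : Disjoint {q : ℚ_[p] × ℚ_[p] | ‖q.2‖ ≤ 1}
      ({q : ℚ_[p] × ℚ_[p] | 1 < ‖q.2‖ ∧ ‖q.1 * q.2 ^ 2‖ ≤ 1} ∪
        {q : ℚ_[p] × ℚ_[p] | 1 < ‖q.2‖ ∧ ‖q.1 + q.2‖ ≤ 1}) := by
    rw [Set.disjoint_left]
    rintro q hq (⟨h1, _⟩ | ⟨h1, _⟩) <;> exact absurd hq (not_le.mpr h1)
  have hdisjBC : Disjoint {q : ℚ_[p] × ℚ_[p] | 1 < ‖q.2‖ ∧ ‖q.1 * q.2 ^ 2‖ ≤ 1}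
      {q : ℚ_[p] × ℚ_[p] | 1 < ‖q.2‖ ∧ ‖q.1 + q.2‖ ≤ 1} := by
    rw [Set.disjoint_left]
    rintro q ⟨hy, hxy2⟩ ⟨hy', hadd⟩
    have hx : ‖q.1‖ = ‖q.2‖ := norm_eq_of_add_le hy' hadd
    have he : ‖q.1 * q.2 ^ 2‖ = ‖q.2‖ ^ 3 := by
      rw [norm_mul, norm_pow, hx]
      ring
    rw [he] at hxy2
    have h1 : 1 < ‖q.2‖^3 := one_lt_pow₀ hy (by norm_num)
    linarith
  -- positivity of integrand and measurability
  have hden : ∀ q : ℚ_[p] × ℚ_[p], (0:ℝ) < max (max ‖q.1 * q.2‖ 1) (‖q.1‖ ^ 2) := fun q =>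
    lt_of_lt_of_le one_pos (le_trans (le_max_right _ 1) (le_max_left _ _))
  have hfc : Continuous fun q : ℚ_[p] × ℚ_[p] => 1 / max (max ‖q.1 * q.2‖ 1) (‖q.1‖ ^ 2) :=
    continuous_const.div
      (((continuous_fst.mul continuous_snd).norm.max continuous_const).max
        (continuous_fst.norm.pow 2))
      (fun q => (hden q).ne')
  rw [hSU, MeasureTheory.integral_eq_lintegral_of_nonneg_ae
    (Filter.Eventually.of_forall (fun q => by positivity))
    hfc.aestronglyMeasurable]
  have hL : ∫⁻ q in {q : ℚ_[p] × ℚ_[p] | ‖q.2‖ ≤ 1} ∪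
      ({q : ℚ_[p] × ℚ_[p] | 1 < ‖q.2‖ ∧ ‖q.1 * q.2 ^ 2‖ ≤ 1} ∪
        {q : ℚ_[p] × ℚ_[p] | 1 < ‖q.2‖ ∧ ‖q.1 + q.2‖ ≤ 1}),
      ENNReal.ofReal (1 / max (max ‖q.1 * q.2‖ 1) (‖q.1‖ ^ 2)) ∂(μ.prod μ)
      = 1 + 3 * (p:ℝ≥0∞)⁻¹ := by
    rw [lintegral_union (mB.union mC) hdisjA, lintegral_union mC hdisjBC, hLA, hLB, hLC]
    ring
  rw [hL, ENNReal.toReal_add (by simp) (by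
      apply ENNReal.mul_ne_top (by simp)
      simpa using hp0E),
    ENNReal.toReal_mul, ENNReal.toReal_inv]
  simp [div_eq_mul_inv]
end

section
/- For every prime p, the p-adic integral of 1/max{1, |x|_p²} over the set {(x,y) ∈ ℚ_p² : |y|_p ≤ 1} (with respect to Haar measure on ℚ_p² normalized so that ℤ_p² has measure 1) equals 1 + 1/p. -/
open MeasureTheory Pointwise
open scoped ENNReal

section Aux

variable {p : ℕ} [hp : Fact p.Prime]

/-- The closed ball of radius `p^n` in `ℚ_p`. -/
def pball (p : ℕ) [Fact p.Prime] (n : ℤ) : Set ℚ_[p] := {x | ‖x‖ ≤ (p : ℝ) ^ n}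

lemma pball_succ (n : ℤ) :
    pball p (n + 1) =
      ⋃ c ∈ Finset.range p, ((c : ℚ_[p]) * (p : ℚ_[p]) ^ (-(n + 1)) +ᵥ pball p n) := by
  have hp1 : (1:ℝ) < p := by exact_mod_cast hp.out.one_lt
  have hp0 : (0:ℝ) < p := by linarith
  have hpQ : (p : ℚ_[p]) ≠ 0 := by
    exact_mod_cast Nat.cast_ne_zero.mpr hp.out.ne_zero
  ext x
  simp only [pball, Set.mem_setOf_eq, Set.mem_iUnion, Finset.mem_range,
    Set.mem_vadd_set_iff_neg_vadd_mem, vadd_eq_add, exists_prop]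
  constructor
  · intro hx
    set z : ℚ_[p] := (p : ℚ_[p]) ^ (n + 1) * x with hz
    have hznorm : ‖z‖ ≤ 1 := by
      rw [hz, norm_mul, Padic.norm_p_zpow]
      calc (p:ℝ) ^ (-(n+1)) * ‖x‖ ≤ (p:ℝ) ^ (-(n+1)) * (p:ℝ) ^ (n+1) := by
            apply mul_le_mul_of_nonneg_left hx (le_of_lt (zpow_pos hp0 _))
        _ = 1 := by
            rw [← zpow_add₀ (ne_of_gt hp0), show -(n+1) + (n+1) = 0 by ring, zpow_zero]
    set w : ℤ_[p] := ⟨z, hznorm⟩ with hw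
    refine ⟨w.appr 1, by simpa using w.appr_lt 1, ?_⟩
    have hspec := w.appr_spec 1
    rw [Ideal.mem_span_singleton] at hspec
    obtain ⟨u, hu⟩ := hspec
    rw [pow_one] at hu
    have huQ : z - (w.appr 1 : ℚ_[p]) = (p : ℚ_[p]) * (u : ℚ_[p]) := by
      have h := congrArg (fun t : ℤ_[p] => (t : ℚ_[p])) hu
      simpa [PadicInt.coe_sub, PadicInt.coe_mul, PadicInt.coe_natCast] using h
    have hxz : x = (p : ℚ_[p]) ^ (-(n+1)) * z := by
      rw [hz, ← mul_assoc, ← zpow_add₀ hpQ, show -(n+1) + (n+1) = 0 by ring,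
        zpow_zero, one_mul]
    have key : -((w.appr 1 : ℚ_[p]) * (p:ℚ_[p]) ^ (-(n+1))) + x
        = (p:ℚ_[p]) ^ (-n) * (u : ℚ_[p]) := by
      have h1 : -((w.appr 1 : ℚ_[p]) * (p:ℚ_[p]) ^ (-(n+1))) + x
          = (p:ℚ_[p]) ^ (-(n+1)) * (z - (w.appr 1 : ℚ_[p])) := by
        rw [hxz]; ring
      rw [h1, huQ, ← mul_assoc]
      congr 1
      rw [← zpow_add_one₀ hpQ]
      norm_num
    rw [key, norm_mul, Padic.norm_p_zpow, neg_neg]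
    calc (p:ℝ)^n * ‖(u:ℚ_[p])‖ ≤ (p:ℝ)^n * 1 := by
          apply mul_le_mul_of_nonneg_left u.norm_le_one (le_of_lt (zpow_pos hp0 _))
      _ = _ := mul_one _
  · rintro ⟨c, hc, hmem⟩
    have h1 : ‖(c : ℚ_[p]) * (p:ℚ_[p]) ^ (-(n+1))‖ ≤ (p:ℝ) ^ (n+1) := by
      rw [norm_mul, Padic.norm_p_zpow, neg_neg]
      calc ‖(c:ℚ_[p])‖ * (p:ℝ)^(n+1) ≤ 1 * (p:ℝ)^(n+1) := by
            apply mul_le_mul_of_nonneg_right _ (le_of_lt (zpow_pos hp0 _))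
            exact_mod_cast Padic.norm_int_le_one (c : ℤ)
        _ = _ := one_mul _
    have h2 : ‖-((c : ℚ_[p]) * (p:ℚ_[p]) ^ (-(n+1))) + x‖ ≤ (p:ℝ) ^ n := hmem
    have : x = (c : ℚ_[p]) * (p:ℚ_[p]) ^ (-(n+1)) +
        (-((c : ℚ_[p]) * (p:ℚ_[p]) ^ (-(n+1))) + x) := by ring
    rw [this]
    refine le_trans (Padic.nonarchimedean _ _) (max_le h1 (le_trans h2 ?_))
    exact zpow_le_zpow_right₀ (le_of_lt hp1) (by linarith)

lemma pball_disj (n : ℤ) {c c' : ℕ} (hc : c < p) (hc' : c' < p) (hne : c ≠ c') :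
    Disjoint ((c : ℚ_[p]) * (p : ℚ_[p]) ^ (-(n + 1)) +ᵥ pball p n)
      ((c' : ℚ_[p]) * (p : ℚ_[p]) ^ (-(n + 1)) +ᵥ pball p n) := by
  have hp1 : (1:ℝ) < p := by exact_mod_cast hp.out.one_lt
  have hp0 : (0:ℝ) < p := by linarith
  rw [Set.disjoint_left]
  rintro x hx hx'
  rw [Set.mem_vadd_set_iff_neg_vadd_mem, vadd_eq_add] at hx hx'
  have key : ((c : ℚ_[p]) - c') * (p : ℚ_[p]) ^ (-(n + 1))
      = (-((c' : ℚ_[p]) * (p:ℚ_[p])^(-(n+1))) + x) - (-((c : ℚ_[p]) * (p:ℚ_[p])^(-(n+1))) + x) := by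
    ring
  have hnorm1 : ‖((c : ℚ_[p]) - c') * (p : ℚ_[p]) ^ (-(n + 1))‖ ≤ (p:ℝ) ^ n := by
    rw [key]
    rw [sub_eq_add_neg]
    refine le_trans (Padic.nonarchimedean _ _) (max_le hx' ?_)
    rw [norm_neg]; exact hx
  have hunit : ‖((c : ℚ_[p]) - c')‖ = 1 := by
    have h1 : ‖((c - c' : ℤ) : ℚ_[p])‖ ≤ 1 := Padic.norm_int_le_one _
    have h2 : ¬ ((p:ℤ) ∣ (c - c' : ℤ)) := by
      intro hd
      have h0 : ((c:ℤ) - c') = 0 :=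
        Int.eq_zero_of_dvd_of_natAbs_lt_natAbs hd (by omega)
      omega
    have h3 : ¬ ‖((c - c' : ℤ) : ℚ_[p])‖ < 1 := by
      rw [Padic.norm_intCast_lt_one_iff]; exact h2
    have : ‖((c - c' : ℤ) : ℚ_[p])‖ = 1 := le_antisymm h1 (not_lt.mp h3)
    rw [← this]; norm_cast
  rw [norm_mul, hunit, one_mul, Padic.norm_p_zpow, neg_neg] at hnorm1
  have : (p:ℝ) ^ n < (p:ℝ) ^ (n+1) := zpow_lt_zpow_right₀ hp1 (by linarith)
  linarith

lemma pball_mono : Monotone (fun n : ℕ => pball p (n : ℤ)) := by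
  intro m n hmn x hx
  simp only [pball, Set.mem_setOf_eq] at hx ⊢
  exact le_trans hx (zpow_le_zpow_right₀ (by exact_mod_cast hp.out.one_lt.le)
    (by exact_mod_cast hmn))

lemma iUnion_pball : ⋃ n : ℕ, pball p (n : ℤ) = Set.univ := by
  ext x
  simp only [Set.mem_iUnion, Set.mem_univ, iff_true, pball, Set.mem_setOf_eq]
  obtain ⟨n, hn⟩ := exists_nat_gt ‖x‖
  refine ⟨n, le_trans hn.le ?_⟩
  rw [zpow_natCast]
  calc (n:ℝ) ≤ (2:ℝ) ^ n := by exact_mod_cast Nat.le_of_lt (Nat.lt_two_pow_self (n := n))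
    _ ≤ (p:ℝ) ^ n := by
        apply pow_le_pow_left₀ (by norm_num)
        exact_mod_cast hp.out.two_le

lemma norm_eq_of_shell {n : ℕ} {x : ℚ_[p]} (hx : x ∈ pball p ((n:ℤ)+1) \ pball p (n:ℤ)) :
    ‖x‖ = (p:ℝ) ^ ((n:ℤ)+1) := by
  have hp1 : (1:ℝ) < p := by exact_mod_cast hp.out.one_lt
  obtain ⟨h1, h2⟩ := hx
  simp only [pball, Set.mem_setOf_eq, not_le] at h1 h2
  have hx0 : x ≠ 0 := by
    intro h; rw [h, norm_zero] at h2
    exact absurd h2 (not_lt.mpr (zpow_pos (by linarith) _).le)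
  rw [Padic.norm_eq_zpow_neg_valuation hx0] at h1 h2 ⊢
  congr 1
  have hlt : (n:ℤ) < -x.valuation := (zpow_lt_zpow_iff_right₀ hp1).mp h2
  have hle : -x.valuation ≤ (n:ℤ)+1 := (zpow_le_zpow_iff_right₀ hp1).mp h1
  omega

lemma enn_term {q : ℝ≥0∞} (hq0 : q ≠ 0) (hqt : q ≠ ⊤) (n : ℕ) :
    ((q ^ (n+1)) ^ 2)⁻¹ * (q ^ (n+1) - q ^ n)
      = (1 - q⁻¹) * q⁻¹ * (q⁻¹) ^ n := by
  have hqi : q⁻¹ ≠ ⊤ := ENNReal.inv_ne_top.mpr hq0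
  have hsub : q ^ (n+1) - q ^ n = q ^ n * (q - 1) := by
    rw [ENNReal.mul_sub (fun _ _ => ENNReal.pow_ne_top hqt), mul_one, ← pow_succ]
  have hinv : ((q ^ (n+1)) ^ 2)⁻¹ = (q⁻¹) ^ n * ((q⁻¹) ^ n * (q⁻¹) ^ 2) := by
    rw [← ENNReal.inv_pow, ← pow_mul]
    rw [show (n+1) * 2 = n + (n + 2) by ring, pow_add, pow_add,
      ENNReal.mul_inv (Or.inl (pow_ne_zero n hq0)) (Or.inl (ENNReal.pow_ne_top hqt)),
      ENNReal.mul_inv (Or.inl (pow_ne_zero n hq0)) (Or.inl (ENNReal.pow_ne_top hqt)),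
      ENNReal.inv_pow, ENNReal.inv_pow]
  have hcancel : (q⁻¹) ^ n * q ^ n = 1 := by
    rw [← mul_pow, ENNReal.inv_mul_cancel hq0 hqt, one_pow]
  have hkey : q⁻¹ * (q - 1) = 1 - q⁻¹ := by
    rw [ENNReal.mul_sub (fun _ _ => hqi), mul_one, ENNReal.inv_mul_cancel hq0 hqt]
  calc ((q ^ (n+1)) ^ 2)⁻¹ * (q ^ (n+1) - q ^ n)
      = ((q⁻¹) ^ n * q ^ n) * ((q⁻¹) ^ n * ((q⁻¹) * (q⁻¹ * (q - 1)))) := by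
        rw [hsub, hinv]; ring
    _ = (1 - q⁻¹) * q⁻¹ * (q⁻¹) ^ n := by rw [hcancel, hkey]; ring

lemma enn_sum {q : ℝ≥0∞} (hq1 : 1 < q) (hqt : q ≠ ⊤) :
    ∑' n : ℕ, (1 - q⁻¹) * q⁻¹ * (q⁻¹) ^ n = q⁻¹ := by
  have hr1 : q⁻¹ < 1 := ENNReal.inv_lt_one.mpr hq1
  have h0 : 1 - q⁻¹ ≠ 0 := by
    rw [ne_eq, tsub_eq_zero_iff_le]
    exact not_le.mpr hr1
  have ht : 1 - q⁻¹ ≠ ⊤ := by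
    exact ne_top_of_le_ne_top ENNReal.one_ne_top tsub_le_self
  rw [ENNReal.tsum_mul_left, ENNReal.tsum_geometric, mul_comm (1 - q⁻¹) q⁻¹, mul_assoc,
    ENNReal.mul_inv_cancel h0 ht, mul_one]

section
variable [MeasurableSpace ℚ_[p]] [BorelSpace ℚ_[p]]
  (μ : Measure ℚ_[p]) [μ.IsAddHaarMeasure]

lemma pball_meas (n : ℤ) : MeasurableSet (pball p n) :=
  (isClosed_le continuous_norm continuous_const).measurableSet

lemma meas_pball_succ (n : ℤ) : μ (pball p (n + 1)) = p * μ (pball p n) := by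
  rw [pball_succ n, measure_biUnion_finset]
  · simp [measure_vadd, Finset.sum_const]
  · intro c hc c' hc' hne
    exact pball_disj n (Finset.mem_range.mp hc) (Finset.mem_range.mp hc') hne
  · intro c _
    exact (pball_meas (p := p) n).const_vadd _

lemma meas_pball (hμ : μ (pball p 0) = 1) (n : ℤ) : μ (pball p n) = (p : ℝ≥0∞) ^ n := by
  have hp0 : (p : ℝ≥0∞) ≠ 0 := by exact_mod_cast hp.out.ne_zero
  have hptop : (p : ℝ≥0∞) ≠ ⊤ := ENNReal.natCast_ne_top p
  induction n using Int.induction_on with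
  | zero => simpa using hμ
  | succ k ih =>
      rw [meas_pball_succ μ, ih, show ((k:ℤ)+1) = 1 + k by ring,
        ENNReal.zpow_add hp0 hptop, zpow_one]
  | pred k ih =>
      have h := meas_pball_succ μ (-(k+1))
      rw [show (-(k+1) : ℤ) + 1 = -k by ring, ih] at h
      have heq : μ (pball p (-(k+1) : ℤ)) = (p : ℝ≥0∞) ^ (-k : ℤ) / p := by
        rw [ENNReal.eq_div_iff hp0 hptop]
        exact h.symm
      have h2 : (p:ℝ≥0∞) ^ (-(k:ℤ)) = p * (p:ℝ≥0∞) ^ (-((k:ℤ)+1)) := by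
        have h3 := ENNReal.zpow_add hp0 hptop 1 (-((k:ℤ)+1))
        rw [show (1 + -((k:ℤ)+1)) = -(k:ℤ) by ring, zpow_one] at h3
        exact h3
      rw [show (-(k:ℤ) - 1) = (-((k:ℤ)+1)) by ring, heq]
      exact ((ENNReal.eq_div_iff hp0 hptop).mpr h2.symm).symm

lemma lintegral_padic (hμ : μ (pball p 0) = 1) :
    ∫⁻ x, ENNReal.ofReal (1 / max 1 (‖x‖ ^ 2)) ∂μ = 1 + (p : ℝ≥0∞)⁻¹ := by
  have hp1 : (1:ℝ) < p := by exact_mod_cast hp.out.one_lt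
  have hq0 : (p : ℝ≥0∞) ≠ 0 := by exact_mod_cast hp.out.ne_zero
  have hqt : (p : ℝ≥0∞) ≠ ⊤ := ENNReal.natCast_ne_top p
  set T : ℕ → Set ℚ_[p] := disjointed (fun n : ℕ => pball p (n : ℤ)) with hT
  have hTmeas : ∀ n, MeasurableSet (T n) :=
    MeasurableSet.disjointed (fun n => pball_meas (n : ℤ))
  have hTdisj : Pairwise (Function.onFun Disjoint T) := disjoint_disjointed _
  have hTunion : ⋃ n, T n = Set.univ := by
    rw [hT, iUnion_disjointed]; exact iUnion_pball
  have key := lintegral_iUnion hTmeas hTdisj (fun x => ENNReal.ofReal (1 / max 1 (‖x‖ ^ 2))) (μ := μ)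
  rw [hTunion, setLIntegral_univ] at key
  rw [key]
  -- value on `T 0`
  have hT0 : T 0 = pball p 0 := disjointed_zero _
  have h0 : ∫⁻ x in T 0, ENNReal.ofReal (1 / max 1 (‖x‖ ^ 2)) ∂μ = 1 := by
    rw [hT0]
    have : ∀ x ∈ pball p 0, ENNReal.ofReal (1 / max 1 (‖x‖ ^ 2)) = (1 : ℝ≥0∞) := by
      intro x hx
      have hx1 : ‖x‖ ≤ 1 := by simpa [pball] using hx
      have : max 1 (‖x‖ ^ 2) = 1 := by
        rw [max_eq_left]
        calc ‖x‖ ^ 2 ≤ 1 ^ 2 := by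
              apply pow_le_pow_left₀ (norm_nonneg x) hx1
          _ = 1 := one_pow 2
      simp [this]
    rw [setLIntegral_congr_fun (pball_meas 0) this,
      setLIntegral_const, one_mul, hμ]
  have hsucc : ∀ n : ℕ, ∫⁻ x in T (n+1), ENNReal.ofReal (1 / max 1 (‖x‖ ^ 2)) ∂μ
      = (1 - (p:ℝ≥0∞)⁻¹) * (p:ℝ≥0∞)⁻¹ * ((p:ℝ≥0∞)⁻¹) ^ n := by
    intro n
    have hTn : T (n+1) = pball p ((n:ℤ)+1) \ pball p (n:ℤ) := by
      rw [hT, ← Order.succ_eq_add_one, pball_mono.disjointed_succ (not_isMax n),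
        Order.succ_eq_add_one]
      push_cast
      rfl
    have hval : ∀ x ∈ T (n+1), ENNReal.ofReal (1 / max 1 (‖x‖ ^ 2))
        = (((p : ℝ≥0∞) ^ (n+1)) ^ 2)⁻¹ := by
      intro x hx
      rw [hTn] at hx
      have hnorm : ‖x‖ = (p:ℝ) ^ ((n:ℤ)+1) := norm_eq_of_shell hx
      have hge : (1:ℝ) ≤ ‖x‖ ^ 2 := by
        rw [hnorm]
        have h1 : (1:ℝ) ≤ (p:ℝ) ^ ((n:ℤ)+1) := one_le_zpow₀ hp1.le (by omega)
        nlinarith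
      rw [max_eq_right hge, hnorm, show ((n:ℤ)+1) = ((n+1 : ℕ) : ℤ) by push_cast; ring,
        zpow_natCast, one_div, ENNReal.ofReal_inv_of_pos (by positivity),
        ← ENNReal.ofReal_natCast p, ← ENNReal.ofReal_pow (by positivity),
        ← ENNReal.ofReal_pow (by positivity)]
    rw [setLIntegral_congr_fun (hTmeas (n+1)) hval,
      setLIntegral_const]
    have hμT : μ (T (n+1)) = (p:ℝ≥0∞) ^ (n+1) - (p:ℝ≥0∞) ^ n := by
      have hsub : pball p (n:ℤ) ⊆ pball p ((n:ℤ)+1) := by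
        have := pball_mono (p := p) (by omega : n ≤ n+1)
        simpa [show (((n+1:ℕ)):ℤ) = (n:ℤ)+1 by push_cast; ring] using this
      rw [hTn, measure_diff hsub
        ((pball_meas (n:ℤ)).nullMeasurableSet)
        (by rw [meas_pball μ hμ]; exact (ENNReal.zpow_lt_top hq0 hqt _).ne),
        meas_pball μ hμ, meas_pball μ hμ,
        show ((n:ℤ)+1) = ((n+1 : ℕ) : ℤ) by push_cast; ring, zpow_natCast, zpow_natCast]
    rw [hμT, enn_term hq0 hqt n]
  rw [tsum_eq_zero_add' ENNReal.summable, h0]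
  congr 1
  rw [tsum_congr hsucc]
  exact enn_sum (by exact_mod_cast hp.out.one_lt) hqt

end
end Aux

/-- For every prime `p`, the `p`-adic integral of `1/max{1,|x|²}` over
`{(x,y) : |y| ≤ 1}` equals `1 + 1/p`. -/
theorem stmt_7 (p : ℕ) [Fact p.Prime] [MeasurableSpace ℚ_[p]] [BorelSpace ℚ_[p]]
    (μ : Measure ℚ_[p]) [μ.IsAddHaarMeasure] (hμ : μ {x : ℚ_[p] | ‖x‖ ≤ 1} = 1) :
    ∫ q in {q : ℚ_[p] × ℚ_[p] | ‖q.2‖ ≤ 1},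
        1 / max 1 (‖q.1‖ ^ 2) ∂(μ.prod μ) = 1 + 1 / p := by
  have hpball0 : pball p 0 = {x : ℚ_[p] | ‖x‖ ≤ 1} := by
    simp [pball]
  have hμ' : μ (pball p 0) = 1 := by rw [hpball0]; exact hμ
  have hset : {q : ℚ_[p] × ℚ_[p] | ‖q.2‖ ≤ 1}
      = Set.univ ×ˢ {y : ℚ_[p] | ‖y‖ ≤ 1} := by
    ext q; simp [Set.mem_prod]
  have hcont : Continuous fun x : ℚ_[p] => 1 / max 1 (‖x‖ ^ 2) :=
    continuous_const.div (continuous_const.max (continuous_norm.pow 2))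
      (fun x => ne_of_gt (lt_of_lt_of_le zero_lt_one (le_max_left _ _)))
  have hprod := setIntegral_prod_mul (μ := μ) (ν := μ)
    (fun x : ℚ_[p] => 1 / max 1 (‖x‖ ^ 2)) (fun _ : ℚ_[p] => (1:ℝ))
    Set.univ {y : ℚ_[p] | ‖y‖ ≤ 1}
  simp only [mul_one] at hprod
  rw [hset, hprod, setIntegral_const, measureReal_def, hμ, ENNReal.toReal_one, one_smul, mul_one,
    setIntegral_univ]
  rw [integral_eq_lintegral_of_nonneg_ae
    (Filter.Eventually.of_forall (fun x => by positivity))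
    hcont.aestronglyMeasurable]
  rw [lintegral_padic μ hμ', ENNReal.toReal_add ENNReal.one_ne_top
    (ENNReal.inv_ne_top.mpr (by exact_mod_cast (Fact.out : p.Prime).ne_zero)),
    ENNReal.toReal_one, ENNReal.toReal_inv, one_div]
  norm_num
end

section
/- Let η_1, …, η_9 be integers satisfying η_1η_9 + η_2η_8 + η_4η_5³η_6²η_7 = 0, and suppose gcd(η_i, η_j) = 1 whenever required by the coprimality conditions of the torsor (in particular gcd(η_8, η_9) = 1, gcd(η_8, η_j) = 1 for j ∈ {1,3,4,5,6}, gcd(η_9, η_j) = 1 for j ∈ {2,3,4,5,6}, and gcd(η_1, η_2) = gcd(η_1, η_7) = gcd(η_2, η_7) = 1). Then no prime p divides all four of the monomials η_2η_3η_4η_5η_6η_8, η_1²η_2²η_3³η_4²η_6, η_3η_4²η_5⁴η_6³η_7², and η_7η_8η_9 simultaneously. -/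
private lemma cop_contra {p a b : ℤ} (hp : Prime p) (h : Int.gcd a b = 1)
    (ha : p ∣ a) (hb : p ∣ b) : False := by
  have hd : p ∣ (Int.gcd a b : ℤ) := Int.dvd_coe_gcd ha hb
  rw [h] at hd
  exact hp.not_isUnit (isUnit_of_dvd_one (by exact_mod_cast hd))

/-- Torsor coprimality: for integers `η₁,…,η₉` satisfying the torsor equation and
coprime for every non-edge pair of the configuration graph (together with
`gcd(η₈,η₉) = 1` as stated), no prime divides all of the four anticanonical
monomials `η₂η₃η₄η₅η₆η₈`, `η₁²η₂²η₃³η₄²η₆`, `η₃η₄²η₅⁴η₆³η₇²`, `η₇η₈η₉`. -/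
theorem stmt_15 (η₁ η₂ η₃ η₄ η₅ η₆ η₇ η₈ η₉ : ℤ)
    (heq : η₁ * η₉ + η₂ * η₈ + η₄ * η₅ ^ 3 * η₆ ^ 2 * η₇ = 0)
    (h12 : Int.gcd η₁ η₂ = 1) (h14 : Int.gcd η₁ η₄ = 1) (h15 : Int.gcd η₁ η₅ = 1)
    (h16 : Int.gcd η₁ η₆ = 1) (h17 : Int.gcd η₁ η₇ = 1) (h18 : Int.gcd η₁ η₈ = 1)
    (h24 : Int.gcd η₂ η₄ = 1) (h25 : Int.gcd η₂ η₅ = 1) (h26 : Int.gcd η₂ η₆ = 1)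
    (h27 : Int.gcd η₂ η₇ = 1) (h29 : Int.gcd η₂ η₉ = 1)
    (h35 : Int.gcd η₃ η₅ = 1) (h36 : Int.gcd η₃ η₆ = 1) (h37 : Int.gcd η₃ η₇ = 1)
    (h38 : Int.gcd η₃ η₈ = 1) (h39 : Int.gcd η₃ η₉ = 1)
    (h45 : Int.gcd η₄ η₅ = 1) (h47 : Int.gcd η₄ η₇ = 1) (h48 : Int.gcd η₄ η₈ = 1)
    (h49 : Int.gcd η₄ η₉ = 1)
    (h58 : Int.gcd η₅ η₈ = 1) (h59 : Int.gcd η₅ η₉ = 1)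
    (h67 : Int.gcd η₆ η₇ = 1) (h68 : Int.gcd η₆ η₈ = 1) (h69 : Int.gcd η₆ η₉ = 1)
    (h89 : Int.gcd η₈ η₉ = 1) :
    ∀ p : ℤ, Prime p →
      ¬((p ∣ η₂ * η₃ * η₄ * η₅ * η₆ * η₈) ∧
        (p ∣ η₁ ^ 2 * η₂ ^ 2 * η₃ ^ 3 * η₄ ^ 2 * η₆) ∧
        (p ∣ η₃ * η₄ ^ 2 * η₅ ^ 4 * η₆ ^ 3 * η₇ ^ 2) ∧
        (p ∣ η₇ * η₈ * η₉)) := by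
  rintro p hp ⟨h1, h2, h3, h4⟩
  -- decompose the fourth monomial
  rcases hp.dvd_mul.1 h4 with h78 | d9
  · rcases hp.dvd_mul.1 h78 with d7 | d8
    · -- p ∣ η₇ : use the first monomial
      rcases hp.dvd_mul.1 h1 with h' | d8
      · rcases hp.dvd_mul.1 h' with h' | d6
        · rcases hp.dvd_mul.1 h' with h' | d5
          · rcases hp.dvd_mul.1 h' with h' | d4
            · rcases hp.dvd_mul.1 h' with d2 | d3
              · exact cop_contra hp h27 d2 d7
              · exact cop_contra hp h37 d3 d7
            · exact cop_contra hp h47 d4 d7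
          · -- p ∣ η₅ and p ∣ η₇ : use the second monomial
            rcases hp.dvd_mul.1 h2 with h' | d6
            · rcases hp.dvd_mul.1 h' with h' | d4
              · rcases hp.dvd_mul.1 h' with h' | d3
                · rcases hp.dvd_mul.1 h' with d1 | d2
                  · exact cop_contra hp h15 (hp.dvd_of_dvd_pow d1) d5
                  · exact cop_contra hp h25 (hp.dvd_of_dvd_pow d2) d5
                · exact cop_contra hp h35 (hp.dvd_of_dvd_pow d3) d5
              · exact cop_contra hp h45 (hp.dvd_of_dvd_pow d4) d5
            · exact cop_contra hp h67 d6 d7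
        · exact cop_contra hp h67 d6 d7
      · -- p ∣ η₈ and p ∣ η₇ : use the second monomial
        rcases hp.dvd_mul.1 h2 with h' | d6
        · rcases hp.dvd_mul.1 h' with h' | d4
          · rcases hp.dvd_mul.1 h' with h' | d3
            · rcases hp.dvd_mul.1 h' with d1 | d2
              · exact cop_contra hp h18 (hp.dvd_of_dvd_pow d1) d8
              · exact cop_contra hp h27 (hp.dvd_of_dvd_pow d2) d7
            · exact cop_contra hp h38 (hp.dvd_of_dvd_pow d3) d8
          · exact cop_contra hp h48 (hp.dvd_of_dvd_pow d4) d8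
        · exact cop_contra hp h68 d6 d8
    · -- p ∣ η₈ : use the second monomial to get p ∣ η₂, then the third
      have d2 : p ∣ η₂ := by
        rcases hp.dvd_mul.1 h2 with h' | d6
        · rcases hp.dvd_mul.1 h' with h' | d4
          · rcases hp.dvd_mul.1 h' with h' | d3
            · rcases hp.dvd_mul.1 h' with d1 | d2
              · exact absurd (cop_contra hp h18 (hp.dvd_of_dvd_pow d1) d8) (by simp)
              · exact hp.dvd_of_dvd_pow d2
            · exact absurd (cop_contra hp h38 (hp.dvd_of_dvd_pow d3) d8) (by simp)
          · exact absurd (cop_contra hp h48 (hp.dvd_of_dvd_pow d4) d8) (by simp)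
        · exact absurd (cop_contra hp h68 d6 d8) (by simp)
      rcases hp.dvd_mul.1 h3 with h' | d7
      · rcases hp.dvd_mul.1 h' with h' | d6
        · rcases hp.dvd_mul.1 h' with h' | d5
          · rcases hp.dvd_mul.1 h' with d3 | d4
            · exact cop_contra hp h38 d3 d8
            · exact cop_contra hp h48 (hp.dvd_of_dvd_pow d4) d8
          · exact cop_contra hp h58 (hp.dvd_of_dvd_pow d5) d8
        · exact cop_contra hp h68 (hp.dvd_of_dvd_pow d6) d8
      · exact cop_contra hp h27 d2 (hp.dvd_of_dvd_pow d7)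
  · -- p ∣ η₉ : every factor of the first monomial is coprime to η₉
    rcases hp.dvd_mul.1 h1 with h' | d8
    · rcases hp.dvd_mul.1 h' with h' | d6
      · rcases hp.dvd_mul.1 h' with h' | d5
        · rcases hp.dvd_mul.1 h' with h' | d4
          · rcases hp.dvd_mul.1 h' with d2 | d3
            · exact cop_contra hp h29 d2 d9
            · exact cop_contra hp h39 d3 d9
          · exact cop_contra hp h49 d4 d9
        · exact cop_contra hp h59 d5 d9
      · exact cop_contra hp h69 d6 d9
    · exact cop_contra hp h89 d8 d9
end
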